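/- arXiv:1905.06724 — 7 statements merged into one kernel-verified Lean document; each statement's English description precedes it below -/
import Mathlib

section
/- For every integer n ≥ 2, the double Roman bondage number of the path P_n on n vertices satisfies b_dR(P_n) = 1. -/
/-!
Let `L n = gammaDRPath n`, that is `n` when `3 ∣ n` and `n + 1` otherwise. The pattern
`0,3,0,0,3,0,…`, with a final `2` when `n ≡ 1 (mod 3)`, is a DRDF of `P_n` of weight `L n`.
Conversely every DRDF of a path on `m` vertices has weight at least `L m`, and at least `m + 1`
if its last vertex has weight `≥ 2`: by induction, cutting off the last one, two or three
vertices at a place where no vertex depends on the other side. Deleting the edge after the first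
vertex (after the second if `n ≡ 1 (mod 3)`) splits `P_n` into `P_t` and `P_(n-t)` with
`L t + L (n - t) > L n`, so one edge raises `γ_dR`, while deleting no edge cannot.
-/

/-- A double Roman dominating function (DRDF) on a graph `G`: a function
`f : V → ℕ` taking values in `{0,1,2,3}` such that every vertex assigned `0`
has a neighbor assigned `3` or two distinct neighbors assigned `2`, and every
vertex assigned `1` has a neighbor assigned at least `2`. -/
def IsDRDF {V : Type*} (G : SimpleGraph V) (f : V → ℕ) : Prop :=
  (∀ v, f v ≤ 3) ∧
  (∀ v, f v = 0 →
    (∃ w, G.Adj v w ∧ f w = 3) ∨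
    (∃ w₁ w₂, G.Adj v w₁ ∧ G.Adj v w₂ ∧ w₁ ≠ w₂ ∧ f w₁ = 2 ∧ f w₂ = 2)) ∧
  (∀ v, f v = 1 → ∃ w, G.Adj v w ∧ 2 ≤ f w)

/-- The double Roman domination number `γ_dR(G)`: the minimum weight of a DRDF on `G`. -/
noncomputable def gammaDR {V : Type*} [Fintype V] (G : SimpleGraph V) : ℕ :=
  sInf {k | ∃ f : V → ℕ, IsDRDF G f ∧ ∑ v, f v = k}

/-- The double Roman bondage number `b_dR(G)`: the minimum cardinality of a set
`B` of edges of `G` such that `γ_dR(G - B) > γ_dR(G)`. -/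
noncomputable def bDR {V : Type*} [Fintype V] (G : SimpleGraph V) : ℕ :=
  sInf {k | ∃ B : Finset (Sym2 V), ↑B ⊆ G.edgeSet ∧ B.card = k ∧
    gammaDR G < gammaDR (G.deleteEdges ↑B)}

open Finset

theorem gammaDR_le_sum {V : Type*} [Fintype V] {G : SimpleGraph V} {f : V → ℕ}
    (hf : IsDRDF G f) :
    gammaDR G ≤ ∑ v, f v :=
  Nat.sInf_le ⟨f, hf, rfl⟩

theorem le_gammaDR {V : Type*} [Fintype V] {G : SimpleGraph V} {c : ℕ}
    (h : ∀ f, IsDRDF G f → c ≤ ∑ v, f v) : c ≤ gammaDR G :=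
  le_csInf ⟨_, fun _ => 2,
      ⟨fun _ => by norm_num, fun _ h => by norm_num at h, fun _ h => by norm_num at h⟩, rfl⟩
    (by rintro _ ⟨f, hf, rfl⟩; exact h f hf)

theorem bDR_eq_one_of_gammaDR_lt {V : Type*} [Fintype V] {G : SimpleGraph V} {e : Sym2 V}
    (he : e ∈ G.edgeSet) (h : gammaDR G < gammaDR (G.deleteEdges {e})) : bDR G = 1 := by
  have hone : ∃ B : Finset (Sym2 V), ↑B ⊆ G.edgeSet ∧ B.card = 1 ∧
      gammaDR G < gammaDR (G.deleteEdges ↑B) :=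
    ⟨{e}, by simpa using he, card_singleton e, by simpa using h⟩
  refine le_antisymm (Nat.sInf_le hone) (le_csInf ⟨1, hone⟩ ?_)
  rintro _ ⟨B, -, rfl, hlt⟩
  refine Nat.one_le_iff_ne_zero.2 fun hB => ?_
  rw [card_eq_zero.1 hB, coe_empty, SimpleGraph.deleteEdges_empty] at hlt
  exact hlt.false

/-- The DRDF conditions on the path whose vertices are `a, …, b - 1` in `ℕ`, consecutive ones
adjacent. -/
def IsPathDRDF (a b : ℕ) (f : ℕ → ℕ) : Prop :=
  ∀ i, a ≤ i → i < b →
    f i ≤ 3 ∧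
    (f i = 0 → (a < i ∧ f (i - 1) = 3) ∨ (i + 1 < b ∧ f (i + 1) = 3) ∨
      (a < i ∧ i + 1 < b ∧ f (i - 1) = 2 ∧ f (i + 1) = 2)) ∧
    (f i = 1 → (a < i ∧ 2 ≤ f (i - 1)) ∨ (i + 1 < b ∧ 2 ≤ f (i + 1)))

def gammaDRPath (n : ℕ) : ℕ := if n % 3 = 0 then n else n + 1

theorem gammaDRPath_add_three (n : ℕ) : gammaDRPath (n + 3) = gammaDRPath n + 3 := by
  unfold gammaDRPath; split_ifs <;> omega

theorem self_le_gammaDRPath (n : ℕ) : n ≤ gammaDRPath n := by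
  unfold gammaDRPath; split_ifs <;> omega

theorem gammaDRPath_le_succ (n : ℕ) : gammaDRPath n ≤ n + 1 := by
  unfold gammaDRPath; split_ifs <;> omega

namespace IsPathDRDF

variable {a b k : ℕ} {f : ℕ → ℕ}

/-- A vertex of weight at most `1` helps no neighbour, and one of weight at least `2` needs no
help, so either hypothesis lets the path be cut between `k - 1` and `k`. -/
theorem restrict (hf : IsPathDRDF a b f) (hkb : k ≤ b) (hcut : f k ≤ 1 ∨ 2 ≤ f (k - 1)) :
    IsPathDRDF a k f := by
  intro i hai hik
  obtain ⟨h3, h0, h1⟩ := hf i hai (by omega)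
  rcases Nat.lt_or_ge (i + 1) k with hlt | hge
  · exact ⟨h3, fun hz => by have := h0 hz; omega, fun ho => by have := h1 ho; omega⟩
  · obtain rfl : k = i + 1 := by omega
    rw [Nat.add_sub_cancel] at hcut
    exact ⟨h3, fun hz => by have := h0 hz; omega, fun ho => by have := h1 ho; omega⟩

theorem last (hf : IsPathDRDF a (k + 2) f) (hak : a ≤ k) :
    (f (k + 1) = 0 → f k = 3) ∧ (f (k + 1) = 1 → 2 ≤ f k) := by
  have := (hf (k + 1) (by omega) (by omega)).2
  rw [Nat.add_sub_cancel] at this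
  omega

theorem mid (hf : IsPathDRDF a b f) (hak : a ≤ k) (hkb : k + 2 < b) (h : f (k + 1) = 0) :
    f k = 3 ∨ f (k + 2) = 3 ∨ (f k = 2 ∧ f (k + 2) = 2) := by
  have := (hf (k + 1) (by omega) (by omega)).2.1 h
  rw [Nat.add_sub_cancel, show k + 1 + 1 = k + 2 from rfl] at this
  omega

theorem weight_bounds (n : ℕ) (hf : IsPathDRDF a (a + n) f) :
    gammaDRPath n ≤ ∑ i ∈ Ico a (a + n), f i ∧
      (0 < n → 2 ≤ f (a + n - 1) → n + 1 ≤ ∑ i ∈ Ico a (a + n), f i) := by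
  induction n using Nat.strong_induction_on with
  | _ n ih =>
  have hsum : ∀ k, ∑ i ∈ Ico a (a + (k + 1)), f i = ∑ i ∈ Ico a (a + k), f i + f (a + k) :=
    fun k => sum_Ico_succ_top (Nat.le_add_right a k) f
  match n with
  | 0 => simp [gammaDRPath]
  | 1 =>
    have := hf a le_rfl (by omega)
    rw [hsum 0]
    simp [gammaDRPath]
    omega
  | 2 =>
    have h₀ := hf a le_rfl (by omega)
    have h₁ := hf.last le_rfl
    rw [hsum 1, hsum 0]
    simp [gammaDRPath]
    omega
  | m + 3 =>
    have hlast : (f (a + m + 2) = 0 → f (a + m + 1) = 3) ∧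
        (f (a + m + 2) = 1 → 2 ≤ f (a + m + 1)) :=
      hf.last (k := a + m + 1) (by omega)
    have hmid : f (a + m + 1) = 0 →
        f (a + m) = 3 ∨ f (a + m + 2) = 3 ∨ (f (a + m) = 2 ∧ f (a + m + 2) = 2) :=
      hf.mid (by omega) (by omega)
    have s₁ : ∑ i ∈ Ico a (a + (m + 1)), f i = ∑ i ∈ Ico a (a + m), f i + f (a + m) := hsum m
    have s₂ : ∑ i ∈ Ico a (a + (m + 2)), f i = ∑ i ∈ Ico a (a + (m + 1)), f i + f (a + m + 1) :=
      hsum (m + 1)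
    have s₃ : ∑ i ∈ Ico a (a + (m + 3)), f i = ∑ i ∈ Ico a (a + (m + 2)), f i + f (a + m + 2) :=
      hsum (m + 2)
    have pre₀ : f (a + m) ≤ 1 → gammaDRPath m ≤ ∑ i ∈ Ico a (a + m), f i := fun h =>
      (ih m (by omega) (hf.restrict (k := a + m) (by omega) (Or.inl h))).1
    have pre₁_high : 2 ≤ f (a + m) → m + 2 ≤ ∑ i ∈ Ico a (a + (m + 1)), f i := fun h =>
      (ih (m + 1) (by omega) (hf.restrict (k := a + (m + 1)) (by omega) (Or.inr h))).2 (by omega) h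
    have pre₁ : f (a + m + 1) ≤ 1 → m + 1 ≤ ∑ i ∈ Ico a (a + (m + 1)), f i := fun h =>
      (self_le_gammaDRPath _).trans
        (ih (m + 1) (by omega) (hf.restrict (k := a + (m + 1)) (by omega) (Or.inl h))).1
    have pre₂_high : 2 ≤ f (a + m + 1) → m + 3 ≤ ∑ i ∈ Ico a (a + (m + 2)), f i := fun h =>
      (ih (m + 2) (by omega) (hf.restrict (k := a + (m + 2)) (by omega) (Or.inr h))).2 (by omega) h
    have := gammaDRPath_add_three m
    have := gammaDRPath_le_succ m
    -- Last weight `≤ 1`: cut after the vertex before it, or for a tail `3,0` around the vertex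
    -- before that. Last weight `≥ 2`: cut after the vertex before it if that has weight `≥ 2`,
    -- otherwise before it, except for a tail `0,2`, which forces weight `≥ 2` one step earlier.
    show _ ∧ (_ → 2 ≤ f (a + m + 2) → _)
    omega

theorem gammaDRPath_le_sum (hf : IsPathDRDF a b f) : gammaDRPath (b - a) ≤ ∑ i ∈ Ico a b, f i := by
  rcases le_or_gt a b with hab | hba
  · obtain ⟨n, rfl⟩ := Nat.exists_eq_add_of_le hab
    simpa using (hf.weight_bounds n).1
  · simp [gammaDRPath, Nat.sub_eq_zero_of_le hba.le]

end IsPathDRDF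

theorem isPathDRDF_of_isDRDF {n a b : ℕ} {G : SimpleGraph (Fin n)} {f : Fin n → ℕ}
    (hf : IsDRDF G f) (hbn : b ≤ n)
    (hG : ∀ u v : Fin n, a ≤ u → (u : ℕ) < b →
      (G.Adj u v ↔ a ≤ v ∧ (v : ℕ) < b ∧ ((u : ℕ) + 1 = v ∨ (v : ℕ) + 1 = u))) :
    IsPathDRDF a b (Function.extend Fin.val f 0) := by
  set F := Function.extend Fin.val f 0
  have hF : ∀ v : Fin n, F v = f v := Fin.val_injective.extend_apply f 0
  intro i hai hib
  let u : Fin n := ⟨i, by omega⟩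
  have hFu : F i = f u := hF u
  have nbr : ∀ w, G.Adj u w → (a < i ∧ (w : ℕ) + 1 = i ∧ F (i - 1) = f w) ∨
      (i + 1 < b ∧ (w : ℕ) = i + 1 ∧ F (i + 1) = f w) := by
    intro w hw
    obtain ⟨hwa, hwb, hw⟩ : a ≤ w ∧ (w : ℕ) < b ∧ (i + 1 = w ∨ (w : ℕ) + 1 = i) :=
      (hG u w hai hib).1 hw
    rcases hw with hw | hw
    · exact Or.inr ⟨by omega, hw.symm, by rw [← hF, ← hw]⟩
    · exact Or.inl ⟨by omega, hw, by rw [← hF, ← hw, Nat.add_sub_cancel]⟩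
  refine ⟨hFu ▸ hf.1 u, fun hz => ?_, fun ho => ?_⟩
  · rcases hf.2.1 u (hFu ▸ hz) with ⟨w, hw, h3⟩ | ⟨w₁, w₂, hw₁, hw₂, hne, h₁, h₂⟩
    · rcases nbr w hw with h | h <;> omega
    · have := Fin.val_injective.ne hne
      rcases nbr w₁ hw₁ with h | h <;> rcases nbr w₂ hw₂ with h' | h' <;> omega
  · obtain ⟨w, hw, h2⟩ := hf.2.2 u (hFu ▸ ho)
    rcases nbr w hw with h | h <;> omega

theorem isDRDF_pathGraph_of_isPathDRDF {n : ℕ} {f : ℕ → ℕ} (hf : IsPathDRDF 0 n f) :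
    IsDRDF (SimpleGraph.pathGraph n) (fun v => f v) := by
  have hpred : ∀ v : Fin n, 0 < (v : ℕ) → (SimpleGraph.pathGraph n).Adj v ⟨v - 1, by omega⟩ := by
    intro v hv; rw [SimpleGraph.pathGraph_adj]; dsimp only; omega
  have hsucc : ∀ (v : Fin n) (h : (v : ℕ) + 1 < n), (SimpleGraph.pathGraph n).Adj v ⟨v + 1, h⟩ := by
    intro v h; rw [SimpleGraph.pathGraph_adj]; dsimp only; omega
  refine ⟨fun v => (hf v (Nat.zero_le _) v.isLt).1, fun v hz => ?_, fun v ho => ?_⟩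
  · rcases (hf v (Nat.zero_le _) v.isLt).2.1 hz with ⟨hv, h⟩ | ⟨hv, h⟩ | ⟨hv, hv', h, h'⟩
    · exact Or.inl ⟨_, hpred v hv, h⟩
    · exact Or.inl ⟨_, hsucc v hv, h⟩
    · have hne : (⟨v - 1, by omega⟩ : Fin n) ≠ ⟨v + 1, hv'⟩ := fun he =>
        absurd (congrArg Fin.val he) (by dsimp only; omega)
      exact Or.inr ⟨_, _, hpred v hv, hsucc v hv', hne, h, h'⟩
  · rcases (hf v (Nat.zero_le _) v.isLt).2.2 ho with ⟨hv, h⟩ | ⟨hv, h⟩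
    · exact ⟨_, hpred v hv, h⟩
    · exact ⟨_, hsucc v hv, h⟩

def pathDRDF (n i : ℕ) : ℕ :=
  (if i % 3 = 1 then 3 else 0) + if i + 1 = n ∧ n % 3 = 1 then 2 else 0

theorem isPathDRDF_pathDRDF (n : ℕ) : IsPathDRDF 0 n (pathDRDF n) := by
  intro i _ hi
  unfold pathDRDF
  split_ifs <;> first | omega | simp

theorem sum_range_pathDRDF (n : ℕ) : ∑ i ∈ range n, pathDRDF n i = gammaDRPath n := by
  have hthree : ∀ k, ∑ i ∈ range k, (if i % 3 = 1 then 3 else 0) = 3 * ((k + 1) / 3) := by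
    intro k
    induction k with
    | zero => rfl
    | succ k ih => rw [sum_range_succ, ih]; split_ifs <;> omega
  simp only [pathDRDF]
  rw [sum_add_distrib, hthree]
  rcases n with _ | n
  · rfl
  · rw [sum_range_succ, sum_eq_zero fun i hi => if_neg (by simp at hi; omega)]
    unfold gammaDRPath
    split_ifs <;> omega

theorem gammaDR_pathGraph_le (n : ℕ) : gammaDR (SimpleGraph.pathGraph n) ≤ gammaDRPath n := by
  simpa [Fin.sum_univ_eq_sum_range (pathDRDF n) n, sum_range_pathDRDF] using
    gammaDR_le_sum (isDRDF_pathGraph_of_isPathDRDF (isPathDRDF_pathDRDF n))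

theorem pathGraph_deleteEdges_adj {n i : ℕ} (hi : i + 1 < n) {u v : Fin n} :
    ((SimpleGraph.pathGraph n).deleteEdges {s(⟨i, by omega⟩, ⟨i + 1, hi⟩)}).Adj u v ↔
      ((u : ℕ) + 1 = v ∨ (v : ℕ) + 1 = u) ∧ ((u : ℕ) ≤ i ↔ (v : ℕ) ≤ i) := by
  rw [SimpleGraph.deleteEdges_adj, SimpleGraph.pathGraph_adj, Set.mem_singleton_iff, Sym2.eq_iff]
  simp only [Fin.ext_iff]
  omega

theorem le_gammaDR_pathGraph_deleteEdges {n i : ℕ} (hi : i + 1 < n) :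
    gammaDRPath (i + 1) + gammaDRPath (n - (i + 1)) ≤
      gammaDR ((SimpleGraph.pathGraph n).deleteEdges {s(⟨i, by omega⟩, ⟨i + 1, hi⟩)}) := by
  refine le_gammaDR fun f hf => ?_
  have hleft := isPathDRDF_of_isDRDF (a := 0) (b := i + 1) hf hi.le
    fun u v _ _ => by rw [pathGraph_deleteEdges_adj]; omega
  have hright := isPathDRDF_of_isDRDF (a := i + 1) (b := n) hf le_rfl
    fun u v _ _ => by rw [pathGraph_deleteEdges_adj]; omega
  calc gammaDRPath (i + 1) + gammaDRPath (n - (i + 1))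
      ≤ ∑ j ∈ range (i + 1), Function.extend Fin.val f 0 j +
          ∑ j ∈ Ico (i + 1) n, Function.extend Fin.val f 0 j := by
        rw [range_eq_Ico]
        exact add_le_add hleft.gammaDRPath_le_sum hright.gammaDRPath_le_sum
    _ = ∑ v, f v := by
        rw [sum_range_add_sum_Ico _ hi.le, ← Fin.sum_univ_eq_sum_range]
        exact sum_congr rfl fun v _ => Fin.val_injective.extend_apply f 0 v

theorem exists_gammaDRPath_lt_add {n : ℕ} (hn : 2 ≤ n) :
    ∃ i, i + 1 < n ∧ gammaDRPath n < gammaDRPath (i + 1) + gammaDRPath (n - (i + 1)) := by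
  by_cases h : n % 3 = 1
  · exact ⟨1, by omega, by unfold gammaDRPath; split_ifs <;> first | omega | contradiction⟩
  · exact ⟨0, by omega, by unfold gammaDRPath; split_ifs <;> first | omega | contradiction⟩

/-- For every integer `n ≥ 2`, the double Roman bondage number of the path `P_n`
on `n` vertices equals `1`. -/
theorem pathGraph_bDR (n : ℕ) (hn : 2 ≤ n) :
    bDR (SimpleGraph.pathGraph n) = 1 := by
  obtain ⟨i, hi, hgap⟩ := exists_gammaDRPath_lt_add hn
  refine bDR_eq_one_of_gammaDR_lt (e := s(⟨i, by omega⟩, ⟨i + 1, hi⟩))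
    (SimpleGraph.pathGraph_adj.2 (Or.inl rfl)) ?_
  exact (gammaDR_pathGraph_le n).trans_lt (hgap.trans_le (le_gammaDR_pathGraph_deleteEdges hi))
end

section
/- For every integer n ≥ 3 with n ≡ 2 (mod 6) or n ≡ 4 (mod 6), the double Roman bondage number of the cycle C_n satisfies b_dR(C_n) = 1. -/
def PD (m : ℕ) (f : ℕ → ℕ) : Prop :=
  (∀ i, i < m → f i = 0 →
      (0 < i ∧ f (i-1) = 3) ∨ (i+1 < m ∧ f (i+1) = 3) ∨
      (0 < i ∧ i+1 < m ∧ f (i-1) = 2 ∧ f (i+1) = 2)) ∧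
  (∀ i, i < m → f i = 1 → (0 < i ∧ 2 ≤ f (i-1)) ∨ (i+1 < m ∧ 2 ≤ f (i+1)))

lemma tail3 (k : ℕ) (f : ℕ → ℕ) (h : PD (k+3) f) :
    3 ≤ f k + f (k+1) + f (k+2) ∧
    (2 ≤ f k → 4 ≤ f k + f (k+1) + f (k+2)) ∧
    (f k = 3 → 5 ≤ f k + f (k+1) + f (k+2)) := by
  have h1 := h.1 (k+2) (by omega)
  have h2 := h.2 (k+2) (by omega)
  have h3 := h.1 (k+1) (by omega)
  have h4 := h.2 (k+1) (by omega)
  simp only [show k+2-1 = k+1 by omega, show k+1-1 = k by omega,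
    show k+1+1 = k+2 by omega, show k+2+1 = k+3 by omega] at h1 h2 h3 h4
  omega

/-- Modifying the new endpoint `k+1` to value `v` keeps path-DRDF conditions
on `0..k+1`, provided the endpoint and vertex-`k` conditions hold. -/
lemma step_aux (k : ℕ) (f : ℕ → ℕ) (v : ℕ) (hPD : PD (k+5) f)
    (hep : (v = 0 → f k = 3) ∧ (v = 1 → 2 ≤ f k))
    (hk : (f k = 0 → (0 < k ∧ f (k-1) = 3) ∨ v = 3 ∨ (0 < k ∧ f (k-1) = 2 ∧ v = 2)) ∧
          (f k = 1 → (0 < k ∧ 2 ≤ f (k-1)) ∨ 2 ≤ v)) :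
    PD (k+2) (fun i => if i = k+1 then v else f i) := by
  constructor
  · intro i hi h0
    simp only at h0
    rcases Nat.lt_or_ge i k with hik | hik
    · -- i < k : same as in f
      rw [if_neg (by omega)] at h0
      have := hPD.1 i (by omega) h0
      simp only [if_neg (show i - 1 ≠ k+1 by omega), if_neg (show i + 1 ≠ k+1 by omega)]
      rcases this with ⟨h1, h2⟩ | ⟨h1, h2⟩ | ⟨h1, h2, h3, h4⟩
      · exact Or.inl ⟨h1, h2⟩
      · exact Or.inr (Or.inl ⟨by omega, h2⟩)
      · exact Or.inr (Or.inr ⟨h1, by omega, h3, h4⟩)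
    · rcases Nat.lt_or_ge i (k+1) with hik2 | hik2
      · -- i = k
        have hik3 : i = k := by omega
        subst hik3
        rw [if_neg (by omega)] at h0
        simp only [if_neg (show i - 1 ≠ i+1 by omega), if_pos (show i + 1 = i+1 from rfl)]
        rcases hk.1 h0 with ⟨h1, h2⟩ | h2 | ⟨h1, h2, h3⟩
      
        · exact Or.inl ⟨h1, h2⟩
        · exact Or.inr (Or.inl ⟨by omega, h2⟩)
        · exact Or.inr (Or.inr ⟨h1, by omega, h2, h3⟩)
      · -- i = k+1, endpoint
        have hik3 : i = k + 1 := by omega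
        subst hik3
        rw [if_pos rfl] at h0
        have := hep.1 h0
        left
        refine ⟨by omega, ?_⟩
        simp only [show k+1-1 = k by omega, if_neg (show ¬ (k = k+1) by omega)]
        exact this
  · intro i hi h1
    simp only at h1
    rcases Nat.lt_or_ge i k with hik | hik
    · rw [if_neg (by omega)] at h1
      have := hPD.2 i (by omega) h1
      simp only [if_neg (show i - 1 ≠ k+1 by omega), if_neg (show i + 1 ≠ k+1 by omega)]
      rcases this with ⟨ha, hb⟩ | ⟨ha, hb⟩
      · exact Or.inl ⟨ha, hb⟩
      · exact Or.inr ⟨by omega, hb⟩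
    · rcases Nat.lt_or_ge i (k+1) with hik2 | hik2
      · have hik3 : i = k := by omega
        subst hik3
        rw [if_neg (by omega)] at h1
        simp only [if_neg (show i - 1 ≠ i+1 by omega), if_pos (show i + 1 = i+1 from rfl)]
        rcases hk.2 h1 with ⟨ha, hb⟩ | hb
        · exact Or.inl ⟨ha, hb⟩
        · exact Or.inr ⟨by omega, hb⟩
      · have hik3 : i = k + 1 := by omega
        subst hik3
        rw [if_pos rfl] at h1
        have := hep.2 h1
        left
        refine ⟨by omega, ?_⟩
        simp only [show k+1-1 = k by omega, if_neg (show ¬ (k = k+1) by omega)]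
        exact this

set_option maxHeartbeats 2000000 in
lemma PD_lower (m : ℕ) (hm : m % 3 ≠ 0) (f : ℕ → ℕ) (hf : PD m f) :
    m + 1 ≤ ∑ i ∈ Finset.range m, f i := by
  induction m using Nat.strong_induction_on generalizing f with
  | _ m ih =>
  rcases Nat.lt_or_ge m 5 with h5 | h5
  · interval_cases m
    · omega
    · -- m = 1
      have h0 := hf.1 0 (by omega)
      have h1 := hf.2 0 (by omega)
      simp only [Finset.sum_range_one]
      omega
    · -- m = 2
      have h0 := hf.1 0 (by omega)
      have h1 := hf.2 0 (by omega)
      have h2 := hf.1 1 (by omega)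
      have h3 := hf.2 1 (by omega)
      simp only [show (1:ℕ)-1 = 0 by omega, show (0:ℕ)+1 = 1 by omega,
        show (1:ℕ)+1 = 2 by omega] at h0 h1 h2 h3
      simp only [show (2:ℕ) = 1+1 by omega, Finset.sum_range_succ, Finset.sum_range_one]
      omega
    · omega
    · -- m = 4
      have htail := tail3 1 f (by rw [show 1+3 = 4 by omega]; exact hf)
      have h0 := hf.1 0 (by omega)
      have h1 := hf.2 0 (by omega)
      simp only [show (1:ℕ)+1 = 2 by omega, show (1:ℕ)+2 = 3 by omega] at htail
      simp only [show (0:ℕ)+1 = 1 by omega] at h0 h1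
      simp only [show (4:ℕ) = 1+1+1+1 by omega, Finset.sum_range_succ, Finset.sum_range_one,
        show (1:ℕ)+1 = 2 by omega, show (2:ℕ)+1 = 3 by omega]
      omega
  · obtain ⟨k, rfl⟩ : ∃ k, m = k + 5 := ⟨m - 5, by omega⟩
    have htail := tail3 (k+2) f (by rw [show k+2+3 = k+5 by omega]; exact hf)
    simp only [show k+2+1 = k+3 by omega, show k+2+2 = k+4 by omega] at htail
    have ha0 := hf.1 (k+1) (by omega)
    have ha1 := hf.2 (k+1) (by omega)
    simp only [show k+1-1 = k by omega, show k+1+1 = k+2 by omega] at ha0 ha1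
    have hc0 := hf.1 k (by omega)
    have hc1 := hf.2 k (by omega)
    have hsum : ∑ i ∈ Finset.range (k+5), f i
        = (∑ i ∈ Finset.range (k+1), f i) + f (k+1) + f (k+2) + f (k+3) + f (k+4) := by
      have e1 := Finset.sum_range_succ f (k+4)
      have e2 := Finset.sum_range_succ f (k+3)
      have e3 := Finset.sum_range_succ f (k+2)
      have e4 := Finset.sum_range_succ f (k+1)
      simp only [show k+4+1 = k+5 by omega, show k+3+1 = k+4 by omega,
        show k+2+1 = k+3 by omega, show k+1+1 = k+2 by omega] at e1 e2 e3 e4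
      omega
    have finish : ∀ v : ℕ, ((v = 0 → f k = 3) ∧ (v = 1 → 2 ≤ f k)) →
        ((f k = 0 → (0 < k ∧ f (k-1) = 3) ∨ v = 3 ∨ (0 < k ∧ f (k-1) = 2 ∧ v = 2)) ∧
         (f k = 1 → (0 < k ∧ 2 ≤ f (k-1)) ∨ 2 ≤ v)) →
        v + 3 ≤ f (k+1) + f (k+2) + f (k+3) + f (k+4) →
        k+5+1 ≤ ∑ i ∈ Finset.range (k+5), f i := by
      intro v hep hk hb
      have hlt : k + 2 < k + 5 := Nat.add_lt_add_left (by norm_num) k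
      have hm2 : (k+2) % 3 ≠ 0 := fun hc => hm (by rw [show k+5 = k+2+3 by ring, Nat.add_mod_right]; exact hc)
      have hg := step_aux k f v hf hep hk
      have hih := ih (k+2) hlt hm2 _ hg
      have hgsum : ∑ i ∈ Finset.range (k+2), (fun i => if i = k+1 then v else f i) i
          = (∑ i ∈ Finset.range (k+1), f i) + v := by
        have e := Finset.sum_range_succ (fun i => if i = k+1 then v else f i) (k+1)
        rw [show k+1+1 = k+2 by omega] at e
        rw [e]
        simp only [if_pos rfl]
        congr 1
        refine Finset.sum_congr rfl (fun i hi => ?_)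
        rw [Finset.mem_range] at hi
        exact if_neg (by omega)
      rw [hgsum] at hih
      clear hgsum hg hep hk hf ih ha0 ha1 hc0 hc1 htail
      omega
    by_cases hA : 2 ≤ f (k+1) ∨ (f (k+1) = 1 ∧ 2 ≤ f k) ∨ (f (k+1) = 0 ∧ f k = 3)
    · refine finish (f (k+1)) ⟨fun h => by omega, fun h => by omega⟩
        ⟨fun h => by omega, fun h => by omega⟩ (by omega)
    · by_cases hB : f (k+1) = 1
      · -- a = 1, b ≤ 1 : v = 2, need t1 ≥ 2 so tail ≥ 4
        refine finish 2 ⟨fun h => by omega, fun h => by omega⟩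
          ⟨fun h => by omega, fun h => by omega⟩ (by omega)
      · -- a = 0, b ≠ 3
        by_cases hC : f k = 2 ∧ f (k+2) = 2
        · refine finish 1 ⟨fun h => by omega, fun h => by omega⟩
            ⟨fun h => by omega, fun h => by omega⟩ (by omega)
        · -- t1 = 3
          refine finish 2 ⟨fun h => by omega, fun h => by omega⟩
            ⟨fun h => by omega, fun h => by omega⟩ (by omega)

lemma cycle_adj (k : ℕ) (u v : Fin (k+3)) :
    (SimpleGraph.cycleGraph (k+3)).Adj u v ↔ u = v + 1 ∨ v = u + 1 := by
  rw [show (SimpleGraph.cycleGraph (k+3)).Adj u v ↔ _ from SimpleGraph.cycleGraph_adj (n := k+1)]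
  rw [sub_eq_iff_eq_add, sub_eq_iff_eq_add]
  constructor
  · rintro (h | h) <;> [left; right] <;> (rw [h]; exact add_comm _ _)
  · rintro (h | h) <;> [left; right] <;> (rw [h]; exact add_comm _ _)

lemma fin_add_one_val (k : ℕ) (u : Fin (k+3)) (h : u.val < k + 2) : (u + 1).val = u.val + 1 := by
  have := Fin.val_add_one (n := k+2) u
  rw [this, if_neg]
  intro hc
  rw [hc] at h
  simp [Fin.last] at h

lemma fin_last_val (k : ℕ) : (Fin.last (k+2)).val = k + 2 := rfl

lemma P_adj (k : ℕ) (u v : Fin (k+3)) :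
    ((SimpleGraph.cycleGraph (k+3)).deleteEdges {s((0 : Fin (k+3)), Fin.last (k+2))}).Adj u v ↔
      u.val + 1 = v.val ∨ v.val + 1 = u.val := by
  rw [SimpleGraph.deleteEdges_adj, cycle_adj, Set.mem_singleton_iff, Sym2.eq_iff]
  constructor
  · rintro ⟨h | h, hne⟩
    · -- u = v + 1
      by_cases hv : v = Fin.last (k+2)
      · exfalso
        apply hne
        left
        refine ⟨?_, hv⟩
        rw [h, hv, Fin.last_add_one]
      · right
        rw [h, fin_add_one_val]
        have := v.isLt
        have : v.val ≠ k + 2 := fun hc => hv (Fin.ext hc)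
        omega
    · by_cases hu : u = Fin.last (k+2)
      · exfalso
        apply hne
        right
        refine ⟨hu, ?_⟩
        rw [h, hu, Fin.last_add_one]
      · left
        rw [h, fin_add_one_val]
        have := u.isLt
        have : u.val ≠ k + 2 := fun hc => hu (Fin.ext hc)
        omega
  · have hu := u.isLt
    have hv := v.isLt
    rintro (h | h)
    · constructor
      · right
        apply Fin.ext
        rw [fin_add_one_val k u (by omega)]
        exact h.symm
      · rintro (⟨h1, h2⟩ | ⟨h1, h2⟩)
        · have e1 : u.val = 0 := by rw [h1]; rfl
          have e2 : v.val = k + 2 := by rw [h2]; rfl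
          omega
        · have e1 : u.val = k+2 := by rw [h1]; rfl
          have e2 : v.val = 0 := by rw [h2]; rfl
          omega
    · constructor
      · left
        apply Fin.ext
        rw [fin_add_one_val k v (by omega)]
        exact h.symm
      · rintro (⟨h1, h2⟩ | ⟨h1, h2⟩)
        · have e1 : u.val = 0 := by rw [h1]; rfl
          have e2 : v.val = k + 2 := by rw [h2]; rfl
          omega
        · have e1 : u.val = k+2 := by rw [h1]; rfl
          have e2 : v.val = 0 := by rw [h2]; rfl
          omega

lemma path_lower (k : ℕ) (hmod : (k+3) % 3 ≠ 0) (f : Fin (k+3) → ℕ)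
    (hf : IsDRDF ((SimpleGraph.cycleGraph (k+3)).deleteEdges
      {s((0 : Fin (k+3)), Fin.last (k+2))}) f) :
    k + 4 ≤ ∑ v, f v := by
  set F : ℕ → ℕ := fun i => if h : i < k+3 then f ⟨i, h⟩ else 0 with hFdef
  have hFv : ∀ (i : ℕ) (h : i < k+3), F i = f ⟨i, h⟩ := fun i h => dif_pos h
  have hPD : PD (k+3) F := by
    constructor
    · intro i hi h0
      rw [hFv i hi] at h0
      rcases hf.2.1 ⟨i, hi⟩ h0 with ⟨w, hadj, hw⟩ | ⟨w₁, w₂, h1, h2, hne, e1, e2⟩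
      · rw [P_adj] at hadj
        simp only [Fin.val_mk] at hadj
        have hwlt := w.isLt
        rcases hadj with hh | hh
        · right; left
          refine ⟨by omega, ?_⟩
          rw [hFv (i+1) (by omega)]
          rw [show (⟨i+1, by omega⟩ : Fin (k+3)) = w from Fin.ext hh]
          exact hw
        · left
          refine ⟨by omega, ?_⟩
          rw [hFv (i-1) (by omega)]
          rw [show (⟨i-1, by omega⟩ : Fin (k+3)) = w from Fin.ext (by simp; omega)]
          exact hw
      · rw [P_adj] at h1 h2
        simp only [Fin.val_mk] at h1 h2
        have hw1 := w₁.isLt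
        have hw2 := w₂.isLt
        rcases h1 with a1 | a1 <;> rcases h2 with a2 | a2
        · exact absurd (Fin.ext (show w₁.val = w₂.val by omega)) hne
        · right; right
          refine ⟨by omega, by omega, ?_, ?_⟩
          · rw [hFv (i-1) (by omega),
              show (⟨i-1, by omega⟩ : Fin (k+3)) = w₂ from Fin.ext (by simp; omega)]
            exact e2
          · rw [hFv (i+1) (by omega),
              show (⟨i+1, by omega⟩ : Fin (k+3)) = w₁ from Fin.ext (by simp; omega)]
            exact e1
        · right; right
          refine ⟨by omega, by omega, ?_, ?_⟩
          · rw [hFv (i-1) (by omega),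
              show (⟨i-1, by omega⟩ : Fin (k+3)) = w₁ from Fin.ext (by simp; omega)]
            exact e1
          · rw [hFv (i+1) (by omega),
              show (⟨i+1, by omega⟩ : Fin (k+3)) = w₂ from Fin.ext (by simp; omega)]
            exact e2
        · exact absurd (Fin.ext (show w₁.val = w₂.val by omega)) hne
    · intro i hi h1
      rw [hFv i hi] at h1
      obtain ⟨w, hadj, hw⟩ := hf.2.2 ⟨i, hi⟩ h1
      rw [P_adj] at hadj
      simp only [Fin.val_mk] at hadj
      have hwlt := w.isLt
      rcases hadj with hh | hh
      · right
        refine ⟨by omega, ?_⟩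
        rw [hFv (i+1) (by omega),
          show (⟨i+1, by omega⟩ : Fin (k+3)) = w from Fin.ext hh]
        exact hw
      · left
        refine ⟨by omega, ?_⟩
        rw [hFv (i-1) (by omega),
          show (⟨i-1, by omega⟩ : Fin (k+3)) = w from Fin.ext (by simp; omega)]
        exact hw
  have hs : ∑ i ∈ Finset.range (k+3), F i = ∑ v, f v := by
    rw [← Fin.sum_univ_eq_sum_range F (k+3)]
    refine Finset.sum_congr rfl fun i _ => ?_
    rw [hFv i.val i.isLt]
  have := PD_lower (k+3) hmod F hPD
  omega

lemma fin_val_one (k : ℕ) : ((1 : Fin (k+3)) : ℕ) = 1 := by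
  rw [Fin.val_one']; exact Nat.mod_eq_of_lt (by omega)

lemma fin_sub_one_val (k : ℕ) (v : Fin (k+3)) : (v - 1).val = (v.val + (k + 2)) % (k+3) := by
  rw [Fin.sub_def, fin_val_one, Fin.val_mk]
  congr 1
  omega

lemma fin_add_one_val' (k : ℕ) (v : Fin (k+3)) : (v + 1).val = (v.val + 1) % (k+3) := by
  rw [Fin.add_def, fin_val_one]

lemma sum_alt (m : ℕ) :
    ∑ i ∈ Finset.range m, (if i % 2 = 0 then 2 else 0) = m + m % 2 := by
  induction m with
  | zero => simp
  | succ m ih =>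
    rw [Finset.sum_range_succ, ih]
    rcases Nat.mod_two_eq_zero_or_one m with hm | hm <;> simp [hm] <;> omega

lemma cycle_upper (k : ℕ) (hk : (k+3) % 2 = 0) :
    IsDRDF (SimpleGraph.cycleGraph (k+3))
      (fun i : Fin (k+3) => if i.val % 2 = 0 then 2 else 0) ∧
    ∑ i : Fin (k+3), (if i.val % 2 = 0 then 2 else 0) = k + 3 := by
  constructor
  · refine ⟨fun v => by dsimp only; split <;> omega, fun v h0 => ?_, fun v h1 => ?_⟩
    · dsimp only at h0
      have hodd : v.val % 2 = 1 := by
        rcases Nat.mod_two_eq_zero_or_one v.val with hm | hm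
        · rw [if_pos hm] at h0; omega
        · exact hm
      have hvlt := v.isLt
      have hv1 : 1 ≤ v.val := by omega
      have hval1 : (v + 1).val = (v.val + 1) % (k+3) := fin_add_one_val' k v
      have hval2 : (v - 1).val = v.val - 1 := by
        rw [fin_sub_one_val]
        rw [show v.val + (k+2) = (v.val - 1) + (k+3) by omega, Nat.add_mod_right]
        exact Nat.mod_eq_of_lt (by omega)
      have hval1' : (v + 1).val % 2 = 0 := by
        by_cases hc : v.val = k + 2
        · rw [hval1, hc, show k+2+1 = k+3 from rfl, Nat.mod_self]
        · rw [hval1, Nat.mod_eq_of_lt (show v.val + 1 < k + 3 by omega)]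
          omega
      right
      refine ⟨v + 1, v - 1, ?_, ?_, ?_, ?_, ?_⟩
      · rw [cycle_adj]; right; rfl
      · rw [cycle_adj]; left; rw [sub_add_cancel]
      · intro hc
        rw [Fin.ext_iff, hval1, hval2] at hc
        by_cases hc2 : v.val = k + 2
        · rw [hc2, show k+2+1 = k+3 from rfl, Nat.mod_self] at hc
          omega
        · rw [Nat.mod_eq_of_lt (show v.val + 1 < k + 3 by omega)] at hc
          omega
      · dsimp only
        rw [if_pos hval1']
      · dsimp only
        rw [if_pos (by rw [hval2]; omega)]
    · dsimp only at h1
      split at h1 <;> omega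
  · rw [Fin.sum_univ_eq_sum_range (fun i => if i % 2 = 0 then 2 else 0) (k+3), sum_alt, hk]

lemma const2_isDRDF {V : Type*} (G : SimpleGraph V) : IsDRDF G (fun _ => 2) :=
  ⟨fun _ => by norm_num, fun v h => by simp at h, fun v h => by simp at h⟩


/-- For every integer `n ≥ 3` with `n ≡ 2 (mod 6)` or `n ≡ 4 (mod 6)`,
the double Roman bondage number of the cycle `C_n` equals `1`. -/
theorem cycleGraph_bDR_one (n : ℕ) (hn : 3 ≤ n) (h : n % 6 = 2 ∨ n % 6 = 4) :
    bDR (SimpleGraph.cycleGraph n) = 1 := by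
  obtain ⟨k, rfl⟩ : ∃ k, n = k + 3 := ⟨n - 3, by omega⟩
  have heven : (k+3) % 2 = 0 := by omega
  have hmod : (k+3) % 3 ≠ 0 := by omega
  obtain ⟨hDRDF, hsum⟩ := cycle_upper k heven
  set C := SimpleGraph.cycleGraph (k+3) with hC
  set e : Sym2 (Fin (k+3)) := s((0 : Fin (k+3)), Fin.last (k+2)) with he
  have hgC : gammaDR C ≤ k + 3 := Nat.sInf_le ⟨_, hDRDF, hsum⟩
  have hPne : {m | ∃ f : Fin (k+3) → ℕ,
      IsDRDF (C.deleteEdges {e}) f ∧ ∑ v, f v = m}.Nonempty :=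
    ⟨_, fun _ => 2, const2_isDRDF _, rfl⟩
  have hgP : k + 4 ≤ gammaDR (C.deleteEdges {e}) := by
    obtain ⟨f, hf, hfs⟩ := Nat.sInf_mem hPne
    have hlow := path_lower k hmod f hf
    calc k + 4 ≤ ∑ v, f v := hlow
      _ = gammaDR (C.deleteEdges {e}) := hfs
  have h1 : 1 ∈ {m | ∃ B : Finset (Sym2 (Fin (k+3))), ↑B ⊆ C.edgeSet ∧ B.card = m ∧
      gammaDR C < gammaDR (C.deleteEdges ↑B)} := by
    refine ⟨{e}, ?_, Finset.card_singleton e, ?_⟩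
    · rw [Finset.coe_singleton, Set.singleton_subset_iff, he, SimpleGraph.mem_edgeSet]
      rw [hC, cycle_adj]
      left
      exact (Fin.last_add_one (k+2)).symm
    · rw [Finset.coe_singleton]
      calc gammaDR C ≤ k + 3 := hgC
        _ < k + 4 := by omega
        _ ≤ gammaDR (C.deleteEdges {e}) := hgP
  have h0 : (0 : ℕ) ∉ {m | ∃ B : Finset (Sym2 (Fin (k+3))), ↑B ⊆ C.edgeSet ∧ B.card = m ∧
      gammaDR C < gammaDR (C.deleteEdges ↑B)} := by
    rintro ⟨B, hB, hcard, hlt⟩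
    rw [Finset.card_eq_zero] at hcard
    subst hcard
    rw [Finset.coe_empty, SimpleGraph.deleteEdges_empty] at hlt
    exact lt_irrefl _ hlt
  have hle : bDR C ≤ 1 := Nat.sInf_le h1
  have hne0 : bDR C ≠ 0 := by
    intro hz
    rcases Nat.sInf_eq_zero.mp hz with h' | h'
    · exact h0 h'
    · exact absurd (h' ▸ h1) (Set.notMem_empty 1)
  omega
end

section
/- If G is a finite simple graph of order n ≥ 3 having exactly k ≥ 1 vertices of degree n − 1, then b_dR(G) = ⌈k/2⌉. -/
/-!
On at least three vertices, a DRDF of weight at most 3 must put 3 on a vertex adjacent to all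
others and 0 elsewhere. Hence `γ_dR(H) ≥ 3`, with equality exactly when `H` has a universal vertex.
So `γ_dR(G) = 3`, and deleting a set `B` of edges raises it iff every universal vertex of `G` lies
on an edge of `B`. An edge covers at most two vertices, and since the universal vertices form a
clique, pairing them up (and joining a leftover one to any other vertex) uses `⌈k/2⌉` edges.
-/

open Finset SimpleGraph

section

variable {V : Type*} {G : SimpleGraph V}

lemma card_le_two_mul_card_of_forall_exists_mem {U : Finset V} {B : Finset (Sym2 V)}
    (h : ∀ u ∈ U, ∃ e ∈ B, u ∈ e) : U.card ≤ 2 * B.card := by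
  classical
  calc U.card ≤ (B.biUnion Sym2.toFinset).card := card_le_card fun u hu => by
          obtain ⟨e, he, hue⟩ := h u hu
          exact mem_biUnion.2 ⟨e, he, Sym2.mem_toFinset.2 hue⟩
    _ ≤ B.card * 2 := card_biUnion_le_card_mul _ _ _ fun e _ => by
          rw [Sym2.card_toFinset]
          split <;> omega
    _ = 2 * B.card := mul_comm _ _

namespace SimpleGraph

lemma exists_edgeCover_of_isClique {U : Finset V} (hU : G.IsClique (U : Set V))
    (hnbr : ∀ u ∈ U, ∃ w, G.Adj u w) :
    ∃ B : Finset (Sym2 V), ↑B ⊆ G.edgeSet ∧ B.card ≤ (U.card + 1) / 2 ∧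
      ∀ u ∈ U, ∃ e ∈ B, u ∈ e := by
  classical
  induction hm : U.card using Nat.strong_induction_on generalizing U with
  | _ m ih =>
  rcases U.eq_empty_or_nonempty with rfl | ⟨u, hu⟩
  · exact ⟨∅, by simp, by simp, by simp⟩
  rcases (U.erase u).eq_empty_or_nonempty with hUu | ⟨u', hu'⟩
  · obtain ⟨w, huw⟩ := hnbr u hu
    obtain rfl : U = {u} := by rw [← insert_erase hu, hUu]; rfl
    exact ⟨{s(u, w)}, by simpa using huw, by simp [← hm], by simp⟩
  obtain ⟨hu'u, hu'U⟩ := mem_erase.1 hu'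
  have hcard : ((U.erase u).erase u').card + 2 = m := by
    have := card_erase_add_one hu'
    have := card_erase_add_one hu
    omega
  obtain ⟨B, hBG, hBcard, hBU⟩ := ih _ (by omega) (U := (U.erase u).erase u')
    (hU.subset (coe_subset.2 ((erase_subset _ _).trans (erase_subset _ _))))
    (fun x hx => hnbr x (mem_of_mem_erase (mem_of_mem_erase hx))) rfl
  refine ⟨insert s(u, u') B, ?_, ?_, fun x hx => ?_⟩
  · rw [coe_insert]
    exact Set.insert_subset (hU hu hu'U hu'u.symm) hBG
  · have := card_insert_le s(u, u') B
    omega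
  · by_cases hxu : x = u
    · exact ⟨_, mem_insert_self _ _, hxu ▸ Sym2.mem_mk_left u u'⟩
    by_cases hxu' : x = u'
    · exact ⟨_, mem_insert_self _ _, hxu' ▸ Sym2.mem_mk_right u u'⟩
    obtain ⟨e, he, hxe⟩ := hBU x (by simp [hxu, hxu', hx])
    exact ⟨e, mem_insert_of_mem he, hxe⟩

lemma isUniversal_deleteEdges_iff {B : Set (Sym2 V)} (hB : B ⊆ G.edgeSet) {v : V} :
    (G.deleteEdges B).IsUniversal v ↔ G.IsUniversal v ∧ ∀ e ∈ B, v ∉ e := by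
  refine ⟨fun h => ⟨fun w hvw => (deleteEdges_adj.1 (h hvw)).1, fun e he hve => ?_⟩,
    fun ⟨hv, hB'⟩ w hvw => deleteEdges_adj.2 ⟨hv hvw, fun he => hB' _ he (Sym2.mem_mk_left v w)⟩⟩
  obtain ⟨w, rfl⟩ := Sym2.mem_iff_exists.1 hve
  exact (deleteEdges_adj.1 (h (G.mem_edgeSet.1 (hB he)).ne)).2 he

end SimpleGraph

variable [Fintype V] {f : V → ℕ}

lemma add_le_sum_of_ne (f : V → ℕ) {a b : V} (hab : a ≠ b) : f a + f b ≤ ∑ v, f v :=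
  add_le_sum (fun _ _ => Nat.zero_le _) (mem_univ a) (mem_univ b) hab

namespace IsDRDF

lemma exists_eq_three_of_sum_le_three (hV : 3 ≤ Fintype.card V) (hf : IsDRDF G f)
    (hs : ∑ v, f v ≤ 3) : ∃ v, f v = 3 := by
  by_contra! h
  -- a vertex assigned `0` would need two neighbours assigned `2`, costing weight 4
  have one_le : ∀ v, 1 ≤ f v := by
    intro v
    by_contra! hv
    rcases hf.2.1 v (by omega) with ⟨w, -, hw⟩ | ⟨w₁, w₂, -, -, hne, h₁, h₂⟩
    · exact h w hw
    · have := add_le_sum_of_ne f hne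
      omega
  have eq_one : ∀ v, f v = 1 := by
    have hcard : ∑ _v : V, 1 ≤ ∑ v, f v := sum_le_sum fun v _ => one_le v
    have hsum : ∑ _v : V, 1 = ∑ v, f v := by
      simp only [sum_const, card_univ, smul_eq_mul, mul_one] at hcard ⊢
      omega
    exact fun v => ((sum_eq_sum_iff_of_le fun v _ => one_le v).1 hsum v (mem_univ v)).symm
  obtain ⟨v⟩ : Nonempty V := Fintype.card_pos_iff.1 (by omega)
  obtain ⟨w, -, hw⟩ := hf.2.2 v (eq_one v)
  have := eq_one w
  omega

lemma three_le_sum (hV : 3 ≤ Fintype.card V) (hf : IsDRDF G f) : 3 ≤ ∑ v, f v := by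
  by_contra! hs
  obtain ⟨v, hv⟩ := hf.exists_eq_three_of_sum_le_three hV hs.le
  have := single_le_sum (fun w _ => Nat.zero_le (f w)) (mem_univ v)
  omega

lemma isUniversal_of_eq_three (hf : IsDRDF G f) (hs : ∑ v, f v ≤ 3) {v : V} (hv : f v = 3) :
    G.IsUniversal v := by
  intro w hvw
  have hw : f w = 0 := by
    have := add_le_sum_of_ne f hvw
    omega
  rcases hf.2.1 w hw with ⟨x, hwx, hx⟩ | ⟨w₁, w₂, -, -, hne, h₁, h₂⟩
  · obtain rfl : x = v := by
      by_contra hxv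
      have := add_le_sum_of_ne f hxv
      omega
    exact hwx.symm
  · have := add_le_sum_of_ne f hne
    omega

lemma gammaDR_le (hf : IsDRDF G f) : gammaDR G ≤ ∑ v, f v :=
  Nat.sInf_le ⟨f, hf, rfl⟩

end IsDRDF

lemma exists_isDRDF_sum_eq_gammaDR (G : SimpleGraph V) :
    ∃ f : V → ℕ, IsDRDF G f ∧ ∑ v, f v = gammaDR G := by
  have hconst : IsDRDF G fun _ => 3 := ⟨fun _ => le_rfl, by simp, by simp⟩
  exact Nat.sInf_mem (s := {k | ∃ f : V → ℕ, IsDRDF G f ∧ ∑ v, f v = k}) ⟨_, _, hconst, rfl⟩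

lemma three_le_gammaDR (hV : 3 ≤ Fintype.card V) : 3 ≤ gammaDR G := by
  obtain ⟨f, hf, hsum⟩ := exists_isDRDF_sum_eq_gammaDR G
  exact hsum ▸ hf.three_le_sum hV

lemma gammaDR_le_three_of_isUniversal {u : V} (hu : G.IsUniversal u) : gammaDR G ≤ 3 := by
  classical
  have hf : IsDRDF G (Pi.single u 3) := by
    refine ⟨fun v => ?_, fun v hv => Or.inl ⟨u, (hu ?_).symm, by simp⟩, fun v hv => ?_⟩
    · by_cases hvu : v = u <;> simp [hvu]
    · rintro rfl
      simp at hv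
    · by_cases hvu : v = u <;> simp [hvu] at hv
  simpa using hf.gammaDR_le

lemma gammaDR_eq_three_of_isUniversal (hV : 3 ≤ Fintype.card V) {u : V}
    (hu : G.IsUniversal u) : gammaDR G = 3 :=
  (gammaDR_le_three_of_isUniversal hu).antisymm (three_le_gammaDR hV)

lemma three_lt_gammaDR_iff (hV : 3 ≤ Fintype.card V) :
    3 < gammaDR G ↔ ∀ v, ¬ G.IsUniversal v := by
  refine ⟨fun h v hv => (gammaDR_le_three_of_isUniversal hv).not_gt h, fun h => ?_⟩
  by_contra! hγ
  obtain ⟨f, hf, hsum⟩ := exists_isDRDF_sum_eq_gammaDR G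
  obtain ⟨v, hv⟩ := hf.exists_eq_three_of_sum_le_three hV (hsum ▸ hγ)
  exact h v (hf.isUniversal_of_eq_three (hsum ▸ hγ) hv)

lemma gammaDR_lt_gammaDR_deleteEdges_iff (hV : 3 ≤ Fintype.card V) {u : V}
    (hu : G.IsUniversal u) {B : Set (Sym2 V)} (hB : B ⊆ G.edgeSet) :
    gammaDR G < gammaDR (G.deleteEdges B) ↔ ∀ v, G.IsUniversal v → ∃ e ∈ B, v ∈ e := by
  rw [gammaDR_eq_three_of_isUniversal hV hu, three_lt_gammaDR_iff hV]
  simp [isUniversal_deleteEdges_iff hB]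

end

theorem bDR_of_k_universal_vertices_general {V : Type*} [Fintype V]
    (G : SimpleGraph V) [DecidableRel G.Adj] (n k : ℕ)
    (hn : Fintype.card V = n) (hn3 : 3 ≤ n) (hk : 1 ≤ k)
    (hdeg : (Finset.univ.filter fun v => G.degree v = n - 1).card = k) :
    bDR G = (k + 1) / 2 := by
  subst hn
  set U := univ.filter fun v => G.degree v = Fintype.card V - 1
  have hU : ∀ v, v ∈ U ↔ G.IsUniversal v := by simp [U]
  obtain ⟨u, hu⟩ := card_pos.1 (hdeg ▸ hk : 0 < U.card)
  have hclique : G.IsClique (U : Set V) := fun v hv w _ hvw => (hU v).1 hv hvw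
  have hnbr : ∀ v ∈ U, ∃ w, G.Adj v w := fun v hv => by
    obtain ⟨w, hw⟩ := Fintype.exists_ne_of_one_lt_card (by omega) v
    exact ⟨w, (hU v).1 hv hw.symm⟩
  have hincr (B : Finset (Sym2 V)) (hB : ↑B ⊆ G.edgeSet) :
      gammaDR G < gammaDR (G.deleteEdges ↑B) ↔ ∀ v ∈ U, ∃ e ∈ B, v ∈ e := by
    simp only [gammaDR_lt_gammaDR_deleteEdges_iff hn3 ((hU u).1 hu) hB, hU, mem_coe]
  obtain ⟨B, hBG, hBcard, hBU⟩ := exists_edgeCover_of_isClique hclique hnbr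
  have hB : B.card ∈ {k | ∃ B : Finset (Sym2 V), ↑B ⊆ G.edgeSet ∧ B.card = k ∧
      gammaDR G < gammaDR (G.deleteEdges ↑B)} := ⟨B, hBG, rfl, (hincr B hBG).2 hBU⟩
  refine le_antisymm ((Nat.sInf_le hB).trans (hdeg ▸ hBcard)) (le_csInf ⟨_, hB⟩ ?_)
  rintro _ ⟨B', hB'G, rfl, hlt⟩
  have := card_le_two_mul_card_of_forall_exists_mem ((hincr B' hB'G).1 hlt)
  omega

/-- If `G` has order `n ≥ 3` and exactly `k ≥ 1` vertices of degree `n - 1`,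
then `b_dR(G) = ⌈k/2⌉`. -/
theorem bDR_of_k_universal_vertices {V : Type*} [Fintype V] [DecidableEq V]
    (G : SimpleGraph V) [DecidableRel G.Adj] (n k : ℕ)
    (hn : Fintype.card V = n) (hn3 : 3 ≤ n) (hk : 1 ≤ k)
    (hdeg : (Finset.univ.filter fun v => G.degree v = n - 1).card = k) :
    bDR G = (k + 1) / 2 :=
  bDR_of_k_universal_vertices_general G n k hn hn3 hk hdeg
end

section
/- For every integer n ≥ 3, the double Roman bondage number of the complete graph K_n satisfies b_dR(K_n) = ⌈n/2⌉. -/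
open Finset

namespace CompleteBDR

variable {n : ℕ}

lemma gamma_nonempty (H : SimpleGraph (Fin n)) :
    {k | ∃ f : Fin n → ℕ, IsDRDF H f ∧ ∑ v, f v = k}.Nonempty := by
  refine ⟨∑ v : Fin n, 3, fun _ => 3, ⟨fun v => le_refl 3, ?_, ?_⟩, rfl⟩
  · intro v h; simp at h
  · intro v h; simp at h

lemma pair_le_sum (f : Fin n → ℕ) {a b : Fin n} (h : a ≠ b) :
    f a + f b ≤ ∑ v, f v := by
  calc f a + f b = ∑ v ∈ ({a, b} : Finset (Fin n)), f v := (Finset.sum_pair h).symm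
    _ ≤ ∑ v, f v := Finset.sum_le_sum_of_subset (subset_univ _)

lemma three_le_gamma (hn : 3 ≤ n) (H : SimpleGraph (Fin n)) : 3 ≤ gammaDR H := by
  refine le_csInf (gamma_nonempty H) ?_
  rintro k ⟨f, ⟨h3, h0, h1⟩, rfl⟩
  by_contra hlt
  push_neg at hlt
  by_cases hall : ∀ v, 1 ≤ f v
  · have hle : (n : ℕ) ≤ ∑ v, f v := by
      calc (n : ℕ) = ∑ _v : Fin n, 1 := by simp
        _ ≤ ∑ v, f v := Finset.sum_le_sum (fun i _ => hall i)
    omega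
  · push_neg at hall
    obtain ⟨v, hv⟩ := hall
    have hv0 : f v = 0 := by omega
    rcases h0 v hv0 with ⟨w, _, hw⟩ | ⟨w₁, w₂, _, _, hne, hw₁, hw₂⟩
    · have := Finset.single_le_sum (f := f) (fun i _ => Nat.zero_le _) (mem_univ w)
      omega
    · have := pair_le_sum f hne
      omega

lemma gamma_le_three_of_dom (H : SimpleGraph (Fin n)) (v : Fin n)
    (hv : ∀ w, w ≠ v → H.Adj v w) : gammaDR H ≤ 3 := by
  apply Nat.sInf_le
  refine ⟨fun w => if w = v then 3 else 0, ⟨?_, ?_, ?_⟩, ?_⟩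
  · intro w; dsimp only; split <;> omega
  · intro w hw
    left
    have hwv : w ≠ v := by
      intro h; subst h; simp at hw
    exact ⟨v, (hv w hwv).symm, if_pos rfl⟩
  · intro w hw; dsimp only at hw; split at hw <;> omega
  · simp

lemma four_le_gamma (hn : 3 ≤ n) (H : SimpleGraph (Fin n))
    (hdom : ∀ v : Fin n, ∃ w, w ≠ v ∧ ¬ H.Adj v w) : 4 ≤ gammaDR H := by
  refine le_csInf (gamma_nonempty H) ?_
  rintro k ⟨f, ⟨h3, h0, h1⟩, rfl⟩
  by_contra hlt
  push_neg at hlt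
  have hsum : ∑ v, f v ≤ 3 := by omega
  by_cases hex : ∃ v, f v = 3
  · obtain ⟨v, hv⟩ := hex
    have hzero : ∀ w, w ≠ v → f w = 0 := by
      intro w hw
      have := pair_le_sum f hw
      omega
    obtain ⟨u, hu, hnadj⟩ := hdom v
    have hu0 : f u = 0 := hzero u hu
    rcases h0 u hu0 with ⟨x, hadj, hx⟩ | ⟨x₁, _x₂, ha1, _, _, hx1, _⟩
    · have hxv : x = v := by
        by_contra hxv
        have := hzero x hxv; omega
      subst hxv
      exact hnadj hadj.symm
    · by_cases hx : x₁ = v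
      · rw [hx, hv] at hx1; omega
      · have := hzero x₁ hx; omega
  · push_neg at hex
    have hpos : ∀ v, 1 ≤ f v := by
      intro v
      by_contra h
      have hv0 : f v = 0 := by omega
      rcases h0 v hv0 with ⟨w, _, hw⟩ | ⟨w₁, w₂, _, _, hne, hw1, hw2⟩
      · exact hex w hw
      · have := pair_le_sum f hne; omega
    have hone : ∀ v, f v = 1 := by
      intro v
      by_contra h
      have h2 : 2 ≤ f v := by have := hpos v; omega
      have hrest : (n - 1 : ℕ) ≤ ∑ w ∈ univ.erase v, f w := by
        calc (n - 1 : ℕ) = ∑ _w ∈ univ.erase v, 1 := by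
              simp [Finset.card_erase_of_mem]
          _ ≤ ∑ w ∈ univ.erase v, f w := Finset.sum_le_sum (fun i _ => hpos i)
      have hsplit : f v + ∑ w ∈ univ.erase v, f w = ∑ v, f v :=
        Finset.add_sum_erase _ f (mem_univ v)
      omega
    obtain ⟨w, _, hw⟩ := h1 ⟨0, by omega⟩ (hone _)
    have := hone w
    omega

lemma mem_sym2_other {α : Type*} {v : α} {e : Sym2 α} (h : v ∈ e) :
    ∃ w, e = s(v, w) := by
  induction e using Sym2.ind with
  | _ a b =>
    rw [Sym2.mem_iff] at h
    rcases h with rfl | rfl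
    · exact ⟨b, rfl⟩
    · exact ⟨a, Sym2.eq_swap⟩

lemma filter_mem_card_le_two {α : Type*} [Fintype α] [DecidableEq α] (e : Sym2 α) :
    (Finset.univ.filter (· ∈ e)).card ≤ 2 := by
  induction e using Sym2.ind with
  | _ a b =>
    have hsub : (Finset.univ.filter (· ∈ s(a, b))) ⊆ {a, b} := by
      intro x hx
      simp only [Finset.mem_filter, Sym2.mem_iff] at hx
      simp [hx.2]
    exact le_trans (Finset.card_le_card hsub) (Finset.card_insert_le a {b})

lemma gamma_top (hn : 3 ≤ n) : gammaDR (⊤ : SimpleGraph (Fin n)) = 3 := by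
  refine le_antisymm ?_ (three_le_gamma hn _)
  refine gamma_le_three_of_dom _ ⟨0, by omega⟩ ?_
  intro w hw
  simp only [SimpleGraph.top_adj]
  exact hw.symm

end CompleteBDR

open CompleteBDR Finset Fin.NatCast in
/-- For every integer `n ≥ 3`, the double Roman bondage number of the complete
graph `K_n` equals `⌈n/2⌉`. -/
theorem completeGraph_bDR (n : ℕ) (hn : 3 ≤ n) :
    bDR (⊤ : SimpleGraph (Fin n)) = (n + 1) / 2 := by
  haveI : NeZero n := ⟨by omega⟩
  set m := (n + 1) / 2 with hm
  -- the deleted matching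
  set E : ℕ → Sym2 (Fin n) := fun i => s(((2 * i : ℕ) : Fin n), ((2 * i + 1 : ℕ) : Fin n))
    with hE
  set B : Finset (Sym2 (Fin n)) := (Finset.range m).image E with hB
  have hval : ∀ a : ℕ, a < n → (((a : ℕ) : Fin n) : ℕ) = a := by
    intro a ha
    rw [Fin.val_natCast]
    exact Nat.mod_eq_of_lt ha
  have hlt2 : ∀ i, i < m → 2 * i < n ∧ 2 * i + 1 ≤ n := by
    intro i hi; omega
  have hEne : ∀ i, i < m → ((2 * i : ℕ) : Fin n) ≠ ((2 * i + 1 : ℕ) : Fin n) := by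
    intro i hi heq
    obtain ⟨h1, h2⟩ := hlt2 i hi
    have hv1 : (((2 * i : ℕ) : Fin n) : ℕ) = 2 * i := hval _ h1
    have hv2 : (((2 * i + 1 : ℕ) : Fin n) : ℕ) = (2 * i + 1) % n := Fin.val_natCast _ _
    rw [Fin.ext_iff, hv1, hv2] at heq
    rcases Nat.lt_or_ge (2 * i + 1) n with h | h
    · rw [Nat.mod_eq_of_lt h] at heq; omega
    · have : 2 * i + 1 = n := by omega
      rw [this, Nat.mod_self] at heq; omega
  have hBsub : ↑B ⊆ (⊤ : SimpleGraph (Fin n)).edgeSet := by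
    intro e he
    simp only [hB, Finset.coe_image, Set.mem_image, Finset.mem_coe, Finset.mem_range] at he
    obtain ⟨i, hi, rfl⟩ := he
    simp only [hE, SimpleGraph.mem_edgeSet, SimpleGraph.top_adj]
    exact hEne i hi
  -- every vertex is in some edge of B
  have htouch : ∀ v : Fin n, ∃ e ∈ B, v ∈ e := by
    intro v
    rcases Nat.even_or_odd (v : ℕ) with ⟨i, hi⟩ | ⟨i, hi⟩
    · have hiv : (v : ℕ) = 2 * i := by omega
      have h2i : 2 * i < n := hiv ▸ v.isLt
      have him : i < m := by omega
      refine ⟨E i, Finset.mem_image_of_mem _ (Finset.mem_range.mpr him), ?_⟩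
      have : ((2 * i : ℕ) : Fin n) = v := by
        rw [Fin.ext_iff, hval _ h2i, hiv]
      rw [hE]
      simp [this]
    · have hiv : (v : ℕ) = 2 * i + 1 := by omega
      have h2i : 2 * i + 1 < n := hiv ▸ v.isLt
      have him : i < m := by omega
      refine ⟨E i, Finset.mem_image_of_mem _ (Finset.mem_range.mpr him), ?_⟩
      have : ((2 * i + 1 : ℕ) : Fin n) = v := by
        rw [Fin.ext_iff, hval _ h2i, hiv]
      rw [hE]
      simp [this]
  -- after deleting B, no vertex dominates
  have hnodom : ∀ v : Fin n, ∃ w, w ≠ v ∧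
      ¬ ((⊤ : SimpleGraph (Fin n)).deleteEdges ↑B).Adj v w := by
    intro v
    obtain ⟨e, heB, hve⟩ := htouch v
    obtain ⟨w, hw⟩ := mem_sym2_other hve
    have hwv : w ≠ v := by
      intro h
      have := hBsub heB
      rw [hw, h] at this
      simp [SimpleGraph.mem_edgeSet] at this
    refine ⟨w, hwv, ?_⟩
    rw [SimpleGraph.deleteEdges_adj]
    rintro ⟨-, hno⟩
    exact hno (by rw [← hw]; exact heB)
  have hmem : bDR (⊤ : SimpleGraph (Fin n)) ≤ B.card := by
    apply Nat.sInf_le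
    refine ⟨B, hBsub, rfl, ?_⟩
    rw [gamma_top hn]
    have := four_le_gamma hn _ hnodom
    omega
  have hcardB : B.card ≤ m := le_trans Finset.card_image_le (by simp)
  -- lower bound
  have hlow : ∀ k ∈ {k | ∃ B' : Finset (Sym2 (Fin n)),
      ↑B' ⊆ (⊤ : SimpleGraph (Fin n)).edgeSet ∧ B'.card = k ∧
      gammaDR (⊤ : SimpleGraph (Fin n)) <
        gammaDR ((⊤ : SimpleGraph (Fin n)).deleteEdges ↑B')}, m ≤ k := by
    rintro k ⟨B', _, rfl, hlt⟩
    by_contra hk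
    push_neg at hk
    -- find an untouched vertex
    set T : Finset (Fin n) := B'.biUnion (fun e => univ.filter (· ∈ e)) with hT
    have hTcard : T.card ≤ 2 * B'.card := by
      refine le_trans (Finset.card_biUnion_le) (le_trans
        (Finset.sum_le_card_nsmul B' _ 2 (fun e _ => filter_mem_card_le_two e)) ?_)
      rw [smul_eq_mul]
      omega
    have hTn : T.card < n := by omega
    obtain ⟨v, hv⟩ : ∃ v : Fin n, v ∉ T := by
      by_contra h
      push_neg at h
      have : (univ : Finset (Fin n)).card ≤ T.card :=
        Finset.card_le_card (fun x _ => h x)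
      simp at this
      omega
    -- v still dominates
    have hdomv : ∀ w, w ≠ v → ((⊤ : SimpleGraph (Fin n)).deleteEdges ↑B').Adj v w := by
      intro w hw
      rw [SimpleGraph.deleteEdges_adj]
      refine ⟨by simpa [SimpleGraph.top_adj] using hw.symm, ?_⟩
      intro hmem'
      apply hv
      rw [hT]
      exact Finset.mem_biUnion.mpr ⟨s(v, w), hmem', by simp⟩
    have h3 := gamma_le_three_of_dom _ v hdomv
    rw [gamma_top hn] at hlt
    omega
  refine le_antisymm (le_trans hmem hcardB) ?_
  refine le_csInf ?_ hlow
  refine ⟨B.card, B, hBsub, rfl, ?_⟩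
  rw [gamma_top hn]
  have := four_le_gamma hn _ hnodom
  omega
end

section
/- For every integer n ≥ 5, the double Roman bondage number of the wheel W_n satisfies b_dR(W_n) = 1. -/
/-- The wheel on `m + 1` vertices: a hub vertex (`none`) joined to every vertex
of the cycle `C_m` (the vertices `some i`). -/
def wheelGraph (m : ℕ) : SimpleGraph (Option (Fin m)) where
  Adj a b :=
    (a = none ∧ b ≠ none) ∨ (b = none ∧ a ≠ none) ∨
      (∃ i j, a = some i ∧ b = some j ∧ (SimpleGraph.cycleGraph m).Adj i j)
  symm := by
    constructor
    rintro a b (⟨ha, hb⟩ | ⟨hb, ha⟩ | ⟨i, j, ha, hb, hij⟩)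
    · exact Or.inr (Or.inl ⟨ha, hb⟩)
    · exact Or.inl ⟨hb, ha⟩
    · exact Or.inr (Or.inr ⟨j, i, hb, ha, hij.symm⟩)
  loopless := by
    constructor
    rintro a (⟨ha, hb⟩ | ⟨hb, ha⟩ | ⟨i, j, ha, hb, hij⟩)
    · exact hb ha
    · exact ha hb
    · rw [ha] at hb; exact hij.ne (Option.some_injective _ hb)

/-- In a cycle of length at least `4`, every vertex has a distinct non-neighbor. -/
lemma cyc_aux (m : ℕ) (hm : 4 ≤ m) (i : Fin m) :
    ∃ j : Fin m, j ≠ i ∧ ¬ (SimpleGraph.cycleGraph m).Adj i j := by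
  have h2 : (2 : ℕ) < m := by omega
  refine ⟨i + ⟨2, h2⟩, ?_, ?_⟩
  · have hv : ((i + ⟨2, h2⟩ : Fin m)).val = (i.val + 2) % m := by
      rw [Fin.add_def]
    intro h
    have := congrArg Fin.val h
    rw [hv] at this
    rcases Nat.lt_or_ge (i.val + 2) m with h' | h'
    · rw [Nat.mod_eq_of_lt h'] at this; omega
    · have : (i.val + 2) % m = i.val + 2 - m := by
        rw [Nat.mod_eq_sub_mod h', Nat.mod_eq_of_lt (by omega)]
      omega
  · rw [SimpleGraph.cycleGraph_adj']
    push_neg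
    have hj : ((i + ⟨2, h2⟩ : Fin m)).val = (i.val + 2) % m := by rw [Fin.add_def]
    constructor
    · rw [Fin.sub_def]
      simp only [hj]
      rcases Nat.lt_or_ge (i.val + 2) m with h' | h'
      · rw [Nat.mod_eq_of_lt h']
        rw [show m - (i.val + 2) + i.val = m - 2 by omega, Nat.mod_eq_of_lt (by omega)]
        omega
      · rw [show (i.val+2) % m = i.val + 2 - m by
          rw [Nat.mod_eq_sub_mod h', Nat.mod_eq_of_lt (by omega)]]
        rw [show m - (i.val + 2 - m) + i.val = m + (m - 2) by omega, Nat.add_mod_left,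
          Nat.mod_eq_of_lt (by omega)]
        omega
    · rw [Fin.sub_def]
      simp only [hj]
      rw [Nat.add_comm (m - i.val) _, Nat.mod_add_mod,
        show i.val + 2 + (m - i.val) = m + 2 by omega, Nat.add_mod_left,
        Nat.mod_eq_of_lt (by omega)]
      omega

/-- Any DRDF on a graph with at least `3` vertices has weight at least `3`. -/
lemma drdf_weight_ge_three {V : Type*} [Fintype V] [DecidableEq V] (G : SimpleGraph V)
    (hV : 3 ≤ Fintype.card V) {f : V → ℕ} (hf : IsDRDF G f) : 3 ≤ ∑ v, f v := by
  obtain ⟨hb, h0, h1⟩ := hf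
  by_cases hz : ∃ v, f v = 0
  · obtain ⟨v, hv⟩ := hz
    rcases h0 v hv with ⟨w, _, hw3⟩ | ⟨w₁, w₂, _, _, hne, hw1, hw2⟩
    · calc 3 = f w := hw3.symm
        _ ≤ ∑ v, f v := Finset.single_le_sum (fun i _ => Nat.zero_le _) (Finset.mem_univ w)
    · calc 3 ≤ f w₁ + f w₂ := by omega
        _ = ∑ x ∈ {w₁, w₂}, f x := (Finset.sum_pair hne).symm
        _ ≤ ∑ v, f v := Finset.sum_le_sum_of_subset (Finset.subset_univ _)
  · push_neg at hz
    calc 3 ≤ Fintype.card V := hV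
      _ = ∑ _v : V, 1 := by simp
      _ ≤ ∑ v, f v := Finset.sum_le_sum (fun i _ => by have := hz i; omega)

/-- The double Roman domination number of the wheel with `m ≥ 4` rim vertices is `3`. -/
lemma wheel_gamma (m : ℕ) (hm : 4 ≤ m) : gammaDR (wheelGraph m) = 3 := by
  have hmem : (3 : ℕ) ∈ {k | ∃ f : Option (Fin m) → ℕ, IsDRDF (wheelGraph m) f ∧ ∑ v, f v = k} := by
    refine ⟨fun v => if v = none then 3 else 0, ⟨?_, ?_, ?_⟩, ?_⟩
    · intro v; dsimp only; split <;> omega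
    · intro v hv
      left
      refine ⟨none, ?_, by simp⟩
      cases v with
      | none => simp at hv
      | some i => exact Or.inr (Or.inl ⟨rfl, by simp⟩)
    · intro v hv; dsimp only at hv; split at hv <;> omega
    · rw [Fintype.sum_option]; simp
  apply le_antisymm
  · exact Nat.sInf_le hmem
  · apply le_csInf ⟨3, hmem⟩
    rintro k ⟨f, hf, rfl⟩
    apply drdf_weight_ge_three _ _ hf
    simp only [Fintype.card_option, Fintype.card_fin]
    omega

/-- After deleting one spoke of the wheel, the double Roman domination number
is at least `4`. -/
lemma wheel_deleted_gamma (m : ℕ) (hm : 4 ≤ m) :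
    4 ≤ gammaDR ((wheelGraph m).deleteEdges {s(none, some ⟨0, by omega⟩)}) := by
  set z : Fin m := ⟨0, by omega⟩
  set G' := (wheelGraph m).deleteEdges {s(none, some z)} with hG'
  have hne : {k | ∃ f : Option (Fin m) → ℕ, IsDRDF G' f ∧ ∑ v, f v = k}.Nonempty := by
    refine ⟨∑ v : Option (Fin m), 3, fun _ => 3, ⟨fun v => le_refl 3, ?_, ?_⟩, rfl⟩
    · intro v hv; simp at hv
    · intro v hv; simp at hv
  have key : ∀ f : Option (Fin m) → ℕ, IsDRDF G' f → 4 ≤ ∑ v, f v := by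
    intro f hf
    obtain ⟨hb, h0, h1⟩ := hf
    by_contra hlt
    push_neg at hlt
    have hsum : ∑ v, f v ≤ 3 := by omega
    have hz : ∃ v, f v = 0 := by
      by_contra hz
      push_neg at hz
      have : (Fintype.card (Option (Fin m)) : ℕ) ≤ ∑ v, f v := by
        calc Fintype.card (Option (Fin m)) = ∑ _v : Option (Fin m), 1 := by simp
          _ ≤ ∑ v, f v := Finset.sum_le_sum (fun i _ => by have := hz i; omega)
      simp only [Fintype.card_option, Fintype.card_fin] at this
      omega
    obtain ⟨v, hv⟩ := hz
    have pair_le : ∀ a b : Option (Fin m), a ≠ b → f a + f b ≤ ∑ v, f v := by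
      intro a b hab
      calc f a + f b = ∑ x ∈ {a, b}, f x := (Finset.sum_pair hab).symm
        _ ≤ ∑ v, f v := Finset.sum_le_sum_of_subset (Finset.subset_univ _)
    rcases h0 v hv with ⟨w, hadj, hw3⟩ | ⟨w₁, w₂, _, _, hne', hw1, hw2⟩
    · have hall : ∀ u, u ≠ w → f u = 0 := by
        intro u hu
        have := pair_le u w hu
        omega
      have hadjall : ∀ u, u ≠ w → G'.Adj u w := by
        intro u hu
        rcases h0 u (hall u hu) with ⟨x, hx, hx3⟩ | ⟨x₁, x₂, _, _, hx12, hx1, hx2⟩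
        · have : x = w := by
            by_contra hxw
            have := hall x hxw
            omega
          rwa [this] at hx
        · by_cases hx1w : x₁ = w
          · rw [hx1w, hw3] at hx1; omega
          · have := hall x₁ hx1w; omega
      cases w with
      | none =>
        have := hadjall (some z) (by simp)
        rw [hG', SimpleGraph.deleteEdges_adj] at this
        exact this.2 (by rw [Sym2.eq_swap]; rfl)
      | some i =>
        obtain ⟨j, hji, hnadj⟩ := cyc_aux m hm i
        have := hadjall (some j) (by simpa using hji)
        rw [hG', SimpleGraph.deleteEdges_adj] at this
        rcases this.1 with ⟨ha, _⟩ | ⟨ha, _⟩ | ⟨i', j', ha, hb, hij⟩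
        · exact Option.some_ne_none j ha
        · exact Option.some_ne_none i ha
        · rw [Option.some_inj] at ha hb
          subst ha; subst hb
          exact hnadj hij.symm
    · have := pair_le w₁ w₂ hne'
      omega
  have := Nat.sInf_mem hne
  obtain ⟨f, hf, hfk⟩ := this
  rw [gammaDR, ← hfk]
  exact key f hf

/-- The double Roman bondage number of the wheel with `m ≥ 4` rim vertices is `1`. -/
lemma bdr_aux (m : ℕ) (hm : 4 ≤ m) : bDR (wheelGraph m) = 1 := by
  have hz : (0 : ℕ) < m := by omega
  set S := {k | ∃ B : Finset (Sym2 (Option (Fin m))), ↑B ⊆ (wheelGraph m).edgeSet ∧ B.card = k ∧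
    gammaDR (wheelGraph m) < gammaDR ((wheelGraph m).deleteEdges ↑B)} with hS
  have h1 : 1 ∈ S := by
    refine ⟨{s(none, some ⟨0, hz⟩)}, ?_, Finset.card_singleton _, ?_⟩
    · rw [Finset.coe_singleton, Set.singleton_subset_iff]
      rw [SimpleGraph.mem_edgeSet]
      exact Or.inl ⟨rfl, by simp⟩
    · rw [wheel_gamma m hm, Finset.coe_singleton]
      have := wheel_deleted_gamma m hm
      omega
  have h0 : 0 ∉ S := by
    rintro ⟨B, hB, hcard, hlt⟩
    rw [Finset.card_eq_zero] at hcard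
    subst hcard
    rw [Finset.coe_empty, SimpleGraph.deleteEdges_empty] at hlt
    exact lt_irrefl _ hlt
  refine le_antisymm (Nat.sInf_le h1) ?_
  rcases Nat.eq_zero_or_pos (sInf S) with h | h
  · rcases Nat.sInf_eq_zero.mp h with hc | hc
    · exact absurd hc h0
    · rw [hc] at h1; exact absurd h1 (Set.notMem_empty _)
  · exact h

/-- For every integer `n ≥ 5`, the double Roman bondage number of the wheel
`W_n = K_1 ∨ C_{n-1}` equals `1`. -/
theorem wheelGraph_bDR (n : ℕ) (hn : 5 ≤ n) :
    bDR (wheelGraph (n - 1)) = 1 := bdr_aux (n - 1) (by omega)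
end

section
/- Let r ≥ 2 and 1 ≤ n_1 ≤ n_2 ≤ ⋯ ≤ n_r be integers with n_1 + ⋯ + n_r ≥ 3, and suppose there is an integer l with 1 ≤ l < r such that n_1 = ⋯ = n_l = 1 and n_{l+1} ≥ 2. Then the complete multipartite graph K_{n_1,n_2,…,n_r} satisfies b_dR(K_{n_1,n_2,…,n_r}) = ⌈l/2⌉. -/
/-!
On at least three vertices every DRDF has weight at least `3`, and weight exactly `3` forces a
vertex of value `3` adjacent to all others; hence `γ_dR(G) = 3` iff `G` has a universal vertex.
When it does, deleting edges raises `γ_dR` iff every universal vertex loses an incident edge.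
An edge covers at most two vertices, and since the universal vertices form a clique they can be
paired off by `⌈u/2⌉` edges, so `b_dR(G) = ⌈u/2⌉` with `u` the number of universal vertices.
The universal vertices of `K_{n_1,…,n_r}` are those in singleton parts, `l` of them.
-/

open Finset

namespace SimpleGraph

variable {V : Type*} (G : SimpleGraph V)

section DoubleRoman

lemma isDRDF_const_two : IsDRDF G fun _ => 2 :=
  ⟨fun _ => by norm_num, fun _ h => by simp at h, fun _ h => by simp at h⟩

lemma isDRDF_single_three [DecidableEq V] {v : V} (hv : G.IsUniversal v) :
    IsDRDF G (Pi.single v 3) := by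
  refine ⟨fun w => ?_, fun w hw => Or.inl ⟨v, hv ?_ |>.symm, by simp⟩, fun w hw => ?_⟩
  · by_cases h : w = v <;> simp [h]
  · rintro rfl; simp at hw
  · by_cases h : w = v <;> simp [h] at hw

variable [Fintype V]

lemma three_le_sum_of_isDRDF [Nontrivial V] {f : V → ℕ} (hf : IsDRDF G f) :
    3 ≤ ∑ v, f v := by
  obtain ⟨-, h0, h1⟩ := hf
  have single (a : V) : f a ≤ ∑ v, f v := single_le_sum (fun _ _ => Nat.zero_le _) (mem_univ a)
  have pair {a b : V} (hab : a ≠ b) : f a + f b ≤ ∑ v, f v :=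
    add_le_sum (fun _ _ => Nat.zero_le _) (mem_univ a) (mem_univ b) hab
  by_cases hzero : ∃ v, f v = 0
  · obtain ⟨v, hv⟩ := hzero
    rcases h0 v hv with ⟨w, -, hw⟩ | ⟨w₁, w₂, -, -, hne, hw₁, hw₂⟩
    · have := single w; omega
    · have := pair hne; omega
  by_cases hone : ∃ v, f v = 1
  · obtain ⟨v, hv⟩ := hone
    obtain ⟨w, hvw, hw⟩ := h1 v hv
    have := pair (G.ne_of_adj hvw); omega
  push Not at hzero hone
  obtain ⟨a, b, hab⟩ := exists_pair_ne V
  have := pair hab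
  have := hzero a; have := hone a; have := hzero b; have := hone b
  omega

lemma exists_isUniversal_of_isDRDF (h3 : 3 ≤ Fintype.card V) {f : V → ℕ} (hf : IsDRDF G f)
    (hsum : ∑ v, f v = 3) : ∃ v, G.IsUniversal v := by
  obtain ⟨-, h0, h1⟩ := hf
  have pair {a b : V} (hab : a ≠ b) : f a + f b ≤ ∑ v, f v :=
    add_le_sum (fun _ _ => Nat.zero_le _) (mem_univ a) (mem_univ b) hab
  by_cases hthree : ∃ u, f u = 3
  · obtain ⟨u, hu⟩ := hthree
    refine ⟨u, fun w huw => ?_⟩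
    have hw : f w = 0 := by have := pair huw; omega
    rcases h0 w hw with ⟨x, hwx, hx⟩ | ⟨w₁, w₂, -, -, hne, hw₁, hw₂⟩
    · obtain rfl : x = u := by
        by_contra hxu
        have := pair hxu; omega
      exact hwx.symm
    · have := pair hne; omega
  -- without a `3` there is no `0`, so the weight forces every value to be `1`
  push Not at hthree
  have hpos (v : V) : 1 ≤ f v := by
    by_contra! hv
    rcases h0 v (by omega) with ⟨w, -, hw⟩ | ⟨w₁, w₂, -, -, hne, hw₁, hw₂⟩
    · exact hthree w hw
    · have := pair hne; omega
  have hone (v : V) : f v = 1 := by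
    by_contra hv
    have hlt : ∑ _v : V, 1 < ∑ v, f v :=
      sum_lt_sum (fun v _ => hpos v) ⟨v, mem_univ v, by have := hpos v; omega⟩
    simp only [sum_const, card_univ, smul_eq_mul, mul_one] at hlt
    omega
  obtain ⟨v⟩ : Nonempty V := Fintype.card_pos_iff.1 (by omega)
  obtain ⟨w, -, hw⟩ := h1 v (hone v)
  have := hone w
  omega

lemma exists_isDRDF_sum_eq_gammaDR : ∃ f : V → ℕ, IsDRDF G f ∧ ∑ v, f v = gammaDR G :=
  Nat.sInf_mem (s := {k | ∃ f : V → ℕ, IsDRDF G f ∧ ∑ v, f v = k}) ⟨_, _, G.isDRDF_const_two, rfl⟩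

lemma three_le_gammaDR [Nontrivial V] : 3 ≤ gammaDR G := by
  obtain ⟨f, hf, hsum⟩ := G.exists_isDRDF_sum_eq_gammaDR
  exact hsum ▸ G.three_le_sum_of_isDRDF hf

lemma gammaDR_eq_three_iff (h3 : 3 ≤ Fintype.card V) :
    gammaDR G = 3 ↔ ∃ v, G.IsUniversal v := by
  classical
  have : Nontrivial V := Fintype.one_lt_card_iff_nontrivial.1 (by omega)
  constructor
  · intro hγ
    obtain ⟨f, hf, hsum⟩ := G.exists_isDRDF_sum_eq_gammaDR
    exact G.exists_isUniversal_of_isDRDF h3 hf (hsum.trans hγ)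
  · rintro ⟨v, hv⟩
    refine le_antisymm (Nat.sInf_le ⟨_, G.isDRDF_single_three hv, ?_⟩) G.three_le_gammaDR
    exact Fintype.sum_pi_single' v 3

lemma three_lt_gammaDR_iff (h3 : 3 ≤ Fintype.card V) :
    3 < gammaDR G ↔ ∀ v, ¬ G.IsUniversal v := by
  have : Nontrivial V := Fintype.one_lt_card_iff_nontrivial.1 (by omega)
  rw [← not_exists, ← G.gammaDR_eq_three_iff h3]
  have := G.three_le_gammaDR
  omega

end DoubleRoman

lemma forall_not_isUniversal_deleteEdges_iff {s : Set (Sym2 V)} (hs : s ⊆ G.edgeSet) :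
    (∀ v, ¬ (G.deleteEdges s).IsUniversal v) ↔ ∀ v, G.IsUniversal v → ∃ e ∈ s, v ∈ e := by
  constructor
  · intro h v hv
    obtain ⟨w, hvw, hnadj⟩ : ∃ w, v ≠ w ∧ ¬ (G.deleteEdges s).Adj v w := by
      simpa [IsUniversal] using h v
    exact ⟨s(v, w), by simpa [hv hvw] using hnadj, Sym2.mem_mk_left v w⟩
  · intro h v hv
    obtain ⟨e, he, hve⟩ := h v fun w hvw => deleteEdges_le s (hv hvw)
    obtain ⟨w, rfl⟩ := Sym2.mem_iff_exists.1 hve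
    exact ((deleteEdges_adj.1 (hv (G.ne_of_adj (hs he)))).2 he)

lemma card_le_two_mul_card_of_forall_exists_mem [DecidableEq V] {U : Finset V}
    {B : Finset (Sym2 V)} (h : ∀ u ∈ U, ∃ e ∈ B, u ∈ e) : #U ≤ 2 * #B :=
  calc #U ≤ #(B.biUnion Sym2.toFinset) := card_le_card fun u hu => by
        obtain ⟨e, he, hue⟩ := h u hu
        exact mem_biUnion.2 ⟨e, he, Sym2.mem_toFinset.2 hue⟩
    _ ≤ ∑ e ∈ B, #e.toFinset := card_biUnion_le
    _ ≤ ∑ _e ∈ B, 2 := sum_le_sum fun e _ => by rw [Sym2.card_toFinset]; split <;> omega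
    _ = 2 * #B := by rw [sum_const, smul_eq_mul, mul_comm]

lemma exists_edges_cover_of_isUniversal [Nontrivial V] [DecidableEq V] (U : Finset V)
    (hU : ∀ u ∈ U, G.IsUniversal u) :
    ∃ B : Finset (Sym2 V), ↑B ⊆ G.edgeSet ∧ 2 * #B ≤ #U + 1 ∧ ∀ u ∈ U, ∃ e ∈ B, u ∈ e := by
  induction U using Finset.strongInduction with
  | H U ih =>
  rcases U.eq_empty_or_nonempty with rfl | ⟨a, ha⟩
  · exact ⟨∅, by simp, by simp, by simp⟩
  obtain ⟨b, hba, hb⟩ : ∃ b, b ≠ a ∧ (b ∈ U ∨ U = {a}) := by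
    by_cases h : ∃ b ∈ U, b ≠ a
    · obtain ⟨b, hbU, hba⟩ := h
      exact ⟨b, hba, Or.inl hbU⟩
    · push Not at h
      obtain ⟨b, hba⟩ := exists_ne a
      exact ⟨b, hba, Or.inr (eq_singleton_iff_unique_mem.2 ⟨ha, h⟩)⟩
  set W := (U.erase a).erase b
  have hWU : W ⊂ U := (erase_subset b _).trans_ssubset (erase_ssubset ha)
  obtain ⟨B, hBG, hBcard, hBcov⟩ := ih W hWU fun u hu => hU u (hWU.subset hu)
  have hWcard : #W + 2 ≤ #U ∨ (#W = 0 ∧ #U = 1) := by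
    rcases hb with hbU | rfl
    · have hb' : b ∈ U.erase a := mem_erase.2 ⟨hba, hbU⟩
      have hW : #W = #(U.erase a) - 1 := card_erase_of_mem hb'
      have := card_erase_of_mem ha
      have := card_pos.2 ⟨b, hb'⟩
      omega
    · right; simp [W]
  refine ⟨insert s(a, b) B, ?_, ?_, fun u hu => ?_⟩
  · rw [coe_insert, Set.insert_subset_iff]
    exact ⟨hU a ha hba.symm, hBG⟩
  · have := card_insert_le s(a, b) B
    omega
  · by_cases hua : u = a
    · exact ⟨s(a, b), mem_insert_self _ _, hua ▸ Sym2.mem_mk_left a b⟩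
    by_cases hub : u = b
    · exact ⟨s(a, b), mem_insert_self _ _, hub ▸ Sym2.mem_mk_right a b⟩
    obtain ⟨e, he, hue⟩ := hBcov u (mem_erase.2 ⟨hub, mem_erase.2 ⟨hua, hu⟩⟩)
    exact ⟨e, mem_insert_of_mem he, hue⟩

theorem bDR_eq_of_isUniversal [Fintype V] (h3 : 3 ≤ Fintype.card V) {v : V}
    (hv : G.IsUniversal v) : bDR G = (G.universalVerts.ncard + 1) / 2 := by
  classical
  have : Nontrivial V := Fintype.one_lt_card_iff_nontrivial.1 (by omega)
  have hγ : gammaDR G = 3 := (G.gammaDR_eq_three_iff h3).2 ⟨v, hv⟩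
  have hbond (B : Finset (Sym2 V)) (hBG : ↑B ⊆ G.edgeSet) :
      gammaDR G < gammaDR (G.deleteEdges ↑B) ↔ ∀ u, G.IsUniversal u → ∃ e ∈ B, u ∈ e := by
    rw [hγ, three_lt_gammaDR_iff _ h3, forall_not_isUniversal_deleteEdges_iff G hBG]
    simp only [mem_coe]
  set U := univ.filter G.IsUniversal
  have hU (u : V) (hu : u ∈ U) : G.IsUniversal u := (mem_filter.1 hu).2
  rw [show G.universalVerts = ↑U by ext; simp [U, universalVerts], Set.ncard_coe_finset]
  obtain ⟨B, hBG, hBcard, hBcov⟩ := G.exists_edges_cover_of_isUniversal U hU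
  have hB : #B ∈ {k | ∃ B : Finset (Sym2 V), ↑B ⊆ G.edgeSet ∧ #B = k ∧
      gammaDR G < gammaDR (G.deleteEdges ↑B)} :=
    ⟨B, hBG, rfl, (hbond B hBG).2 fun u hu => hBcov u (by simpa [U] using hu)⟩
  refine le_antisymm ((Nat.sInf_le hB).trans (by omega)) (le_csInf ⟨_, hB⟩ ?_)
  rintro _ ⟨C, hCG, rfl, hC⟩
  have := card_le_two_mul_card_of_forall_exists_mem fun u hu => (hbond C hCG).1 hC u (hU u hu)
  omega

lemma completeMultipartiteGraph_isUniversal_iff {ι : Type*} {V : ι → Type*} {v : Σ i, V i} :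
    (completeMultipartiteGraph V).IsUniversal v ↔ Subsingleton (V v.1) := by
  obtain ⟨i, a⟩ := v
  constructor
  · intro h
    refine ⟨fun b c => ?_⟩
    have key (b : V i) : b = a := by
      by_contra hba
      exact h (w := ⟨i, b⟩) (fun hab => hba (sigma_mk_injective hab).symm) rfl
    rw [key b, key c]
  · intro _ w haw hi
    obtain ⟨j, b⟩ := w
    obtain rfl : i = j := hi
    exact haw (congrArg _ (Subsingleton.elim a b))

end SimpleGraph

lemma Sigma.ncard_setOf_fst_lt_of_eq_one {r l : ℕ} (hlr : l ≤ r) {n : Fin r → ℕ}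
    (hones : ∀ i : Fin r, (i : ℕ) < l → n i = 1) :
    {v : Σ i, Fin (n i) | (v.1 : ℕ) < l}.ncard = l := by
  have hpos (i : Fin l) : 0 < n (Fin.castLE hlr i) := by rw [hones _ i.2]; omega
  let f : Fin l → Σ i, Fin (n i) := fun i => ⟨Fin.castLE hlr i, ⟨0, hpos i⟩⟩
  have hf : Function.Injective f := fun i j hij =>
    Fin.castLE_injective hlr (congrArg Sigma.fst hij)
  have hrange : Set.range f = {v | (v.1 : ℕ) < l} := by
    ext ⟨i, a⟩
    refine ⟨?_, fun hi => ⟨⟨i, hi⟩, ?_⟩⟩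
    · rintro ⟨j, hj⟩
      rw [← hj]
      exact j.2
    · have := hones i hi
      show (⟨i, ⟨0, _⟩⟩ : Σ i, Fin (n i)) = ⟨i, a⟩
      congr 1
      ext
      have := a.2
      omega
  rw [← hrange, Set.ncard_range_of_injective hf, Nat.card_eq_fintype_card, Fintype.card_fin]

theorem completeMultipartite_bDR_ones_general (r : ℕ) (n : Fin r → ℕ)
    (hmono : Monotone n) (hsum : 3 ≤ ∑ i, n i)
    (l : ℕ) (hl : 1 ≤ l) (hlr : l < r)
    (hones : ∀ i : Fin r, (i : ℕ) < l → n i = 1)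
    (hnext : 2 ≤ n ⟨l, hlr⟩) :
    bDR (SimpleGraph.completeMultipartiteGraph fun i => Fin (n i)) = (l + 1) / 2 := by
  set G := SimpleGraph.completeMultipartiteGraph fun i => Fin (n i)
  have huniv (v : Σ i, Fin (n i)) : G.IsUniversal v ↔ (v.1 : ℕ) < l := by
    rw [SimpleGraph.completeMultipartiteGraph_isUniversal_iff, Fin.subsingleton_iff_le_one]
    refine ⟨fun h => ?_, fun h => (hones _ h).le⟩
    by_contra! hvl
    have := hmono (show (⟨l, hlr⟩ : Fin r) ≤ v.1 from hvl)
    omega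
  have hcard : 3 ≤ Fintype.card (Σ i, Fin (n i)) := by
    simpa only [Fintype.card_sigma, Fintype.card_fin] using hsum
  have hU : G.universalVerts = {v | (v.1 : ℕ) < l} := Set.ext huniv
  have h0 : 0 < n ⟨0, by omega⟩ := by rw [hones ⟨0, by omega⟩ hl]; exact one_pos
  rw [G.bDR_eq_of_isUniversal hcard ((huniv ⟨_, ⟨0, h0⟩⟩).2 hl), hU,
    Sigma.ncard_setOf_fst_lt_of_eq_one hlr.le hones]

/-- Let `1 ≤ n_1 ≤ ⋯ ≤ n_r` (`r ≥ 2`) with total order at least `3`, and suppose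
`n_1 = ⋯ = n_l = 1` and `n_{l+1} ≥ 2` for some `1 ≤ l < r`. Then
`b_dR(K_{n_1,…,n_r}) = ⌈l/2⌉`. -/
theorem completeMultipartite_bDR_ones (r : ℕ) (hr : 2 ≤ r) (n : Fin r → ℕ)
    (hmono : Monotone n) (hpos : ∀ i, 1 ≤ n i) (hsum : 3 ≤ ∑ i, n i)
    (l : ℕ) (hl : 1 ≤ l) (hlr : l < r)
    (hones : ∀ i : Fin r, (i : ℕ) < l → n i = 1)
    (hnext : 2 ≤ n ⟨l, hlr⟩) :
    bDR (SimpleGraph.completeMultipartiteGraph fun i => Fin (n i)) = (l + 1) / 2 :=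
  completeMultipartite_bDR_ones_general r n hmono hsum l hl hlr hones hnext
end

section
/- Let r ≥ 2 and 2 ≤ n_1 ≤ n_2 ≤ ⋯ ≤ n_r be integers, and suppose there is an integer l with 1 ≤ l < r such that n_1 = ⋯ = n_l = 2 and n_{l+1} ≥ 3. Then the complete multipartite graph K_{n_1,n_2,…,n_r} satisfies b_dR(K_{n_1,n_2,…,n_r}) = ⌈l/2⌉. -/
lemma isDRDF_const3 {V : Type*} (G : SimpleGraph V) : IsDRDF G (fun _ => 3) :=
  ⟨fun _ => le_refl 3, fun v hv => by simp at hv, fun v hv => by simp at hv⟩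

/-- Key structural lemma: in a "partite-compatible" graph with at least 5 vertices
in which every vertex has a partmate, any DRDF of weight ≤ 4 consists of two
vertices labelled 2 with all other vertices labelled 0 and adjacent to both. -/
lemma key_drdf {V ι : Type*} [Fintype V] (part : V → ι) (H : SimpleGraph V)
    (hH : ∀ v w, H.Adj v w → part v ≠ part w)
    (hmate : ∀ v : V, ∃ w, w ≠ v ∧ part w = part v)
    (hcard : 5 ≤ Fintype.card V)
    {f : V → ℕ} (hf : IsDRDF H f) (hsum : ∑ v, f v ≤ 4) :
    ∃ a b, a ≠ b ∧ f a = 2 ∧ f b = 2 ∧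
      ∀ c, c ≠ a → c ≠ b → f c = 0 ∧ H.Adj c a ∧ H.Adj c b := by
  classical
  have hpair : ∀ a b : V, a ≠ b → f a + f b ≤ 4 := by
    intro a b hab
    calc f a + f b = ∑ v ∈ ({a, b} : Finset V), f v := (Finset.sum_pair hab).symm
      _ ≤ ∑ v, f v := Finset.sum_le_sum_of_subset (Finset.subset_univ _)
      _ ≤ 4 := hsum
  have htriple : ∀ a b c : V, a ≠ b → a ≠ c → b ≠ c → f a + f b + f c ≤ 4 := by
    intro a b c hab hac hbc
    have : f a + f b + f c = ∑ v ∈ ({a, b, c} : Finset V), f v := by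
      rw [Finset.sum_insert (by simp [hab, hac]), Finset.sum_pair hbc]
      ring
    rw [this]
    calc ∑ v ∈ ({a, b, c} : Finset V), f v ≤ ∑ v, f v :=
        Finset.sum_le_sum_of_subset (Finset.subset_univ _)
      _ ≤ 4 := hsum
  have h3 : ∀ w, f w ≠ 3 := by
    intro w hw
    obtain ⟨w', hw'ne, hw'part⟩ := hmate w
    have hne : ∀ x, H.Adj w' x → x ≠ w := by
      intro x hadj hxw
      exact hH w' x hadj (hxw ▸ hw'part)
    have hle : f w' ≤ 1 := by have := hpair w w' (Ne.symm hw'ne); omega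
    interval_cases h : f w'
    · rcases (hf.2.1 w' h) with ⟨x, hadj, hx3⟩ | ⟨x, _, hadj, _, _, hx2, _⟩
      · have := hpair w x (Ne.symm (hne x hadj)); omega
      · have := hpair w x (Ne.symm (hne x hadj)); omega
    · obtain ⟨x, hadj, hx2⟩ := hf.2.2 w' h
      have := hpair w x (Ne.symm (hne x hadj)); omega
  have h0 : ∃ v, f v = 0 := by
    by_contra h
    push_neg at h
    have : (5 : ℕ) ≤ ∑ v, f v := by
      calc (5 : ℕ) ≤ Fintype.card V := hcard
        _ = ∑ _v : V, 1 := by simp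
        _ ≤ ∑ v, f v := Finset.sum_le_sum fun v _ =>
            Nat.one_le_iff_ne_zero.mpr (h v)
    omega
  obtain ⟨v, hv0⟩ := h0
  rcases hf.2.1 v hv0 with ⟨x, _, hx3⟩ | ⟨a, b, _, _, hab, ha2, hb2⟩
  · exact absurd hx3 (h3 x)
  refine ⟨a, b, hab, ha2, hb2, ?_⟩
  have honly2 : ∀ y, f y = 2 → y = a ∨ y = b := by
    intro y hy
    by_contra h
    push_neg at h
    have := htriple a b y hab (Ne.symm h.1) (Ne.symm h.2); omega
  intro c hca hcb
  have hc0 : f c = 0 := by have := htriple a b c hab (Ne.symm hca) (Ne.symm hcb); omega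
  refine ⟨hc0, ?_⟩
  rcases hf.2.1 c hc0 with ⟨x, _, hx3⟩ | ⟨y₁, y₂, hadj1, hadj2, hy12, hy1, hy2⟩
  · exact absurd hx3 (h3 x)
  rcases honly2 y₁ hy1 with rfl | rfl <;> rcases honly2 y₂ hy2 with rfl | rfl
  · exact absurd rfl hy12
  · exact ⟨hadj1, hadj2⟩
  · exact ⟨hadj2, hadj1⟩
  · exact absurd rfl hy12

/-- The weight-4 DRDF supported on a part of size 2 whose edges are intact. -/
lemma part2_drdf {r : ℕ} {n : Fin r → ℕ} (p : Fin r) (hnp : n p = 2)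
    (H : SimpleGraph ((i : Fin r) × Fin (n i)))
    (hadj : ∀ (j : Fin (n p)) (w : (i : Fin r) × Fin (n i)), w.1 ≠ p → H.Adj w ⟨p, j⟩) :
    ∃ f, IsDRDF H f ∧ ∑ v, f v = 4 := by
  classical
  refine ⟨fun v => if v.1 = p then 2 else 0, ⟨?_, ?_, ?_⟩, ?_⟩
  · intro v; dsimp only; split <;> omega
  · intro v hv
    have hvp : v.1 ≠ p := by intro h; simp [h] at hv
    right
    refine ⟨⟨p, ⟨0, by omega⟩⟩, ⟨p, ⟨1, by omega⟩⟩, hadj _ v hvp, hadj _ v hvp, ?_,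
      if_pos rfl, if_pos rfl⟩
    intro h
    have := congrArg (fun x : (i : Fin r) × Fin (n i) => (x.2 : ℕ)) h
    simp at this
  · intro v hv
    by_cases h : v.1 = p <;> simp [h] at hv
  · rw [← Finset.univ_sigma_univ, Finset.sum_sigma]
    have : ∀ i : Fin r, (∑ j : Fin (n i), if (⟨i, j⟩ : (i : Fin r) × Fin (n i)).1 = p then 2 else 0)
        = if i = p then 2 * n i else 0 := by
      intro i
      by_cases h : i = p <;> simp [h, Finset.sum_const, mul_comm]
    simp only [this, Finset.sum_ite_eq' Finset.univ p _, Finset.mem_univ, if_pos, hnp]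

/-- The canonical vertex of the `i`-th part. -/
def vtxD {r : ℕ} (n : Fin r → ℕ) (h2 : ∀ i, 2 ≤ n i) (i : Fin r) :
    (i : Fin r) × Fin (n i) :=
  ⟨i, ⟨0, by have := h2 i; omega⟩⟩

/-- The `j`-th edge of the bondage set: it joins the canonical vertices of
parts `2j` and `2j+1`. -/
def eFD {r : ℕ} (n : Fin r → ℕ) (h2 : ∀ i, 2 ≤ n i) (l : ℕ) (hlr : l < r)
    (j : Fin ((l + 1) / 2)) : Sym2 ((i : Fin r) × Fin (n i)) :=
  s(vtxD n h2 ⟨2 * j.val, by have := j.isLt; omega⟩,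
    vtxD n h2 ⟨2 * j.val + 1, by have := j.isLt; omega⟩)

/-- Let `2 ≤ n_1 ≤ ⋯ ≤ n_r` (`r ≥ 2`), and suppose `n_1 = ⋯ = n_l = 2` and
`n_{l+1} ≥ 3` for some `1 ≤ l < r`. Then `b_dR(K_{n_1,…,n_r}) = ⌈l/2⌉`. -/
theorem completeMultipartite_bDR_twos (r : ℕ) (hr : 2 ≤ r) (n : Fin r → ℕ)
    (hmono : Monotone n) (h2 : ∀ i, 2 ≤ n i)
    (l : ℕ) (hl : 1 ≤ l) (hlr : l < r)
    (htwos : ∀ i : Fin r, (i : ℕ) < l → n i = 2)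
    (hnext : 3 ≤ n ⟨l, hlr⟩) :
    bDR (SimpleGraph.completeMultipartiteGraph fun i => Fin (n i)) = (l + 1) / 2 := by
  classical
  set G := SimpleGraph.completeMultipartiteGraph fun i => Fin (n i) with hG
  have hGadj : ∀ v w : (i : Fin r) × Fin (n i), G.Adj v w ↔ v.1 ≠ w.1 := fun v w => by
    simp [hG]
  -- every vertex has a partmate
  have hmate : ∀ v : (i : Fin r) × Fin (n i), ∃ w : (i : Fin r) × Fin (n i),
      w ≠ v ∧ w.1 = v.1 := by
    intro ⟨i, j⟩
    have : Nontrivial (Fin (n i)) := Fin.nontrivial_iff_two_le.mpr (h2 i)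
    obtain ⟨j', hj'⟩ := exists_ne j
    refine ⟨⟨i, j'⟩, fun h => hj' ?_, rfl⟩
    have : (j' : ℕ) = (j : ℕ) :=
      congrArg (fun x : (i : Fin r) × Fin (n i) => (x.2 : ℕ)) h
    exact Fin.ext this
  -- at least 5 vertices
  have hcard : 5 ≤ Fintype.card ((i : Fin r) × Fin (n i)) := by
    rw [Fintype.card_sigma]
    have hne : (⟨0, by omega⟩ : Fin r) ≠ ⟨l, hlr⟩ := by
      intro h
      have := congrArg Fin.val h
      simp at this; omega
    calc (5 : ℕ) ≤ Fintype.card (Fin (n ⟨0, by omega⟩)) + Fintype.card (Fin (n ⟨l, hlr⟩)) := by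
          simp only [Fintype.card_fin]
          have := h2 (⟨0, by omega⟩ : Fin r)
          omega
      _ = ∑ i ∈ ({⟨0, by omega⟩, ⟨l, hlr⟩} : Finset (Fin r)), Fintype.card (Fin (n i)) :=
          (Finset.sum_pair (f := fun i => Fintype.card (Fin (n i))) hne).symm
      _ ≤ ∑ i, Fintype.card (Fin (n i)) :=
          Finset.sum_le_sum_of_subset (Finset.subset_univ _)
  -- any subgraph of G is partite-compatible
  have hHpart : ∀ (H : SimpleGraph ((i : Fin r) × Fin (n i))), H ≤ G →
      ∀ v w : (i : Fin r) × Fin (n i), H.Adj v w → v.1 ≠ w.1 := by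
    intro H hle v w h
    exact (hGadj v w).mp (hle h)
  -- gammaDR of any spanning subgraph of G is at least 4
  have hge4 : ∀ (H : SimpleGraph ((i : Fin r) × Fin (n i))), H ≤ G →
      ∀ k ∈ {k | ∃ f : ((i : Fin r) × Fin (n i)) → ℕ, IsDRDF H f ∧ ∑ v, f v = k},
      4 ≤ k := by
    rintro H hle k ⟨f, hf, rfl⟩
    by_contra hk
    push_neg at hk
    obtain ⟨a, b, hab, ha2, hb2, -⟩ :=
      key_drdf Sigma.fst H (hHpart H hle) hmate hcard hf (by omega)
    have : f a + f b ≤ ∑ v, f v := by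
      rw [← Finset.sum_pair hab]
      exact Finset.sum_le_sum_of_subset (Finset.subset_univ _)
    omega
  -- gammaDR G = 4
  have hgamma : gammaDR G = 4 := by
    obtain ⟨f, hf, hs⟩ := part2_drdf (n := n) ⟨0, by omega⟩ (htwos _ (by simpa using Nat.pos_of_ne_zero (show l ≠ 0 by omega)))
      G (fun j w hw => (hGadj _ _).mpr hw)
    refine le_antisymm (Nat.sInf_le ⟨f, hf, hs⟩) ?_
    exact le_csInf ⟨_, ⟨fun _ => 3, isDRDF_const3 G, rfl⟩⟩ (hge4 G le_rfl)
  set N := (l + 1) / 2 with hN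
  set B : Finset (Sym2 ((i : Fin r) × Fin (n i))) :=
    Finset.univ.image (eFD n h2 l hlr) with hB
  have heFinj : Function.Injective (eFD n h2 l hlr) := by
    intro j j' h
    rw [eFD, eFD, Sym2.eq_iff] at h
    rcases h with ⟨h1, -⟩ | ⟨h1, h2'⟩
    · have : 2 * (j : ℕ) = 2 * (j' : ℕ) :=
        congrArg (fun x : (i : Fin r) × Fin (n i) => (x.1 : ℕ)) h1
      exact Fin.ext (by omega)
    · have t1 : 2 * (j : ℕ) = 2 * (j' : ℕ) + 1 :=
        congrArg (fun x : (i : Fin r) × Fin (n i) => (x.1 : ℕ)) h1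
      omega
  have hBcard : B.card = N := by
    rw [hB, Finset.card_image_of_injective _ heFinj, Finset.card_univ, Fintype.card_fin]
  have hBsub : ↑B ⊆ G.edgeSet := by
    intro e he
    rw [Finset.mem_coe, hB, Finset.mem_image] at he
    obtain ⟨j, -, rfl⟩ := he
    rw [eFD]
    simp only [SimpleGraph.mem_edgeSet]
    rw [hGadj]
    intro h
    have : 2 * (j : ℕ) = 2 * (j : ℕ) + 1 := congrArg Fin.val h
    omega
  -- gammaDR (G - B) ≥ 5
  have hdel_le : G.deleteEdges ↑B ≤ G := SimpleGraph.deleteEdges_le _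
  have hge5 : ∀ k ∈ {k | ∃ f : ((i : Fin r) × Fin (n i)) → ℕ,
      IsDRDF (G.deleteEdges ↑B) f ∧ ∑ v, f v = k}, 5 ≤ k := by
    rintro k ⟨f, hf, rfl⟩
    by_contra hk
    push_neg at hk
    obtain ⟨a, b, hab, ha2, hb2, hprop⟩ :=
      key_drdf Sigma.fst _ (hHpart _ hdel_le) hmate hcard hf (by omega)
    -- a and b are in the same part
    obtain ⟨pa, ja⟩ := a
    obtain ⟨pb, jb⟩ := b
    have hsame : pb = pa := by
      by_contra hne
      obtain ⟨a', ha'ne, ha'part⟩ := hmate ⟨pa, ja⟩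
      have ha'b : a' ≠ ⟨pb, jb⟩ := by
        intro h
        rw [h] at ha'part
        exact hne ha'part
      have := (hprop a' ha'ne ha'b).2.1
      exact (hHpart _ hdel_le _ _ this) ha'part
    subst hsame
    -- every vertex of part pb is a or b
    have hin : ∀ x : (i : Fin r) × Fin (n i), x.1 = pb →
        x = ⟨pb, ja⟩ ∨ x = ⟨pb, jb⟩ := by
      intro x hx
      by_contra h
      push_neg at h
      have := (hprop x h.1 h.2).2.1
      exact (hHpart _ hdel_le _ _ this) (by rw [hx])
    -- part pb has exactly 2 vertices, hence its index is < l
    have hnpa : ¬ 3 ≤ n pb := by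
      intro h3
      have hz : ∃ z : Fin (n pb), z ∉ ({ja, jb} : Finset (Fin (n pb))) := by
        by_contra h
        push_neg at h
        have hsub : (Finset.univ : Finset (Fin (n pb))) ⊆ {ja, jb} := fun z _ => h z
        have h1 := Finset.card_le_card hsub
        have h2' := Finset.card_insert_le ja ({jb} : Finset (Fin (n pb)))
        rw [Finset.card_univ, Fintype.card_fin] at h1
        simp at h2'
        omega
      obtain ⟨z, hz⟩ := hz
      simp only [Finset.mem_insert, Finset.mem_singleton, not_or] at hz
      have h1 : (⟨pb, z⟩ : (i : Fin r) × Fin (n i)) ≠ ⟨pb, ja⟩ := fun h =>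
        hz.1 (Fin.ext (congrArg (fun x : (i : Fin r) × Fin (n i) => (x.2 : ℕ)) h))
      have h2' : (⟨pb, z⟩ : (i : Fin r) × Fin (n i)) ≠ ⟨pb, jb⟩ := fun h =>
        hz.2 (Fin.ext (congrArg (fun x : (i : Fin r) × Fin (n i) => (x.2 : ℕ)) h))
      have := (hprop ⟨pb, z⟩ h1 h2').2.1
      exact (hHpart _ hdel_le _ _ this) rfl
    have hpal : (pb : ℕ) < l := by
      by_contra h
      push_neg at h
      exact hnpa (le_trans hnext (hmono (show (⟨l, hlr⟩ : Fin r) ≤ pb from h)))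
    -- the deleted edge touching part pb
    have hjlt : (pb : ℕ) / 2 < N := by rw [hN]; omega
    have hedge : ∃ x y : (i : Fin r) × Fin (n i), x.1 = pb ∧ y.1 ≠ pb ∧ s(x, y) ∈ B := by
      have hmem : eFD n h2 l hlr ⟨(pb : ℕ) / 2, hjlt⟩ ∈ B :=
        Finset.mem_image_of_mem _ (Finset.mem_univ _)
      rw [eFD] at hmem
      rcases (by omega : (pb : ℕ) = 2 * ((pb : ℕ) / 2) ∨
          (pb : ℕ) = 2 * ((pb : ℕ) / 2) + 1) with h | h
      · refine ⟨_, _, ?_, ?_, hmem⟩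
        · exact Fin.ext (show 2 * ((pb : ℕ) / 2) = (pb : ℕ) by omega)
        · intro hh
          have : 2 * ((pb : ℕ) / 2) + 1 = (pb : ℕ) := congrArg Fin.val hh
          omega
      · rw [Sym2.eq_swap] at hmem
        refine ⟨_, _, ?_, ?_, hmem⟩
        · exact Fin.ext (show 2 * ((pb : ℕ) / 2) + 1 = (pb : ℕ) by omega)
        · intro hh
          have : 2 * ((pb : ℕ) / 2) = (pb : ℕ) := congrArg Fin.val hh
          omega
    obtain ⟨x, y, hx1, hy1, hmem⟩ := hedge
    have hyne_a : y ≠ ⟨pb, ja⟩ := fun h => hy1 (by rw [h])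
    have hyne_b : y ≠ ⟨pb, jb⟩ := fun h => hy1 (by rw [h])
    obtain ⟨-, hadja, hadjb⟩ := hprop y hyne_a hyne_b
    rw [SimpleGraph.deleteEdges_adj] at hadja hadjb
    rcases hin x hx1 with rfl | rfl
    · exact hadja.2 (by rw [Sym2.eq_swap]; exact hmem)
    · exact hadjb.2 (by rw [Sym2.eq_swap]; exact hmem)
  -- N is in the bondage set
  have hmemN : N ∈ {k | ∃ B : Finset (Sym2 ((i : Fin r) × Fin (n i))),
      ↑B ⊆ G.edgeSet ∧ B.card = k ∧ gammaDR G < gammaDR (G.deleteEdges ↑B)} := by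
    refine ⟨B, hBsub, hBcard, ?_⟩
    rw [hgamma]
    have : (5 : ℕ) ≤ gammaDR (G.deleteEdges ↑B) :=
      le_csInf ⟨_, ⟨fun _ => 3, isDRDF_const3 _, rfl⟩⟩ hge5
    omega
  -- lower bound: any bondage set has at least N edges
  have hlow : ∀ k ∈ {k | ∃ B : Finset (Sym2 ((i : Fin r) × Fin (n i))),
      ↑B ⊆ G.edgeSet ∧ B.card = k ∧ gammaDR G < gammaDR (G.deleteEdges ↑B)}, N ≤ k := by
    rintro k ⟨B', hB'sub, hB'card, hB'lt⟩
    by_contra hk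
    push_neg at hk
    -- the set of parts touched by B'
    set partsOf : Sym2 ((i : Fin r) × Fin (n i)) → Finset (Fin r) :=
      Sym2.lift ⟨fun x y => {x.1, y.1}, fun x y => Finset.pair_comm _ _⟩ with hpartsOf
    set T : Finset (Fin r) := B'.biUnion partsOf with hT
    have hTcard : T.card ≤ 2 * B'.card := by
      calc T.card ≤ ∑ e ∈ B', (partsOf e).card := Finset.card_biUnion_le
        _ ≤ ∑ _e ∈ B', 2 := Finset.sum_le_sum (by
            intro e _
            induction e using Sym2.ind with
            | _ x y =>
              rw [hpartsOf, Sym2.lift_mk]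
              exact le_trans (Finset.card_insert_le _ _) (by simp))
        _ = 2 * B'.card := by rw [Finset.sum_const, smul_eq_mul, mul_comm]
    set L : Finset (Fin r) := Finset.univ.filter (fun p : Fin r => (p : ℕ) < l) with hL
    have hLcard : l ≤ L.card := by
      have := Finset.card_le_card_of_injOn
        (s := (Finset.univ : Finset (Fin l))) (t := L)
        (fun i : Fin l => Fin.castLE hlr.le i)
        (fun i _ => by simp [hL]) ((Fin.castLE_injective hlr.le).injOn)
      simpa using this
    have hex : ∃ p ∈ L, p ∉ T := by
      by_contra h
      push_neg at h
      have := Finset.card_le_card (fun p hp => h p hp)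
      omega
    obtain ⟨p, hpL, hpT⟩ := hex
    have hpl : (p : ℕ) < l := by
      rw [hL, Finset.mem_filter] at hpL
      exact hpL.2
    obtain ⟨f, hf, hs⟩ := part2_drdf (n := n) p (htwos p hpl) (G.deleteEdges ↑B')
      (by
        intro j w hw
        rw [SimpleGraph.deleteEdges_adj]
        refine ⟨(hGadj _ _).mpr hw, ?_⟩
        intro hmem
        apply hpT
        rw [hT, Finset.mem_biUnion]
        refine ⟨_, (Finset.mem_coe.mp hmem), ?_⟩
        rw [hpartsOf, Sym2.lift_mk]
        simp)
    have : gammaDR (G.deleteEdges ↑B') ≤ 4 := Nat.sInf_le ⟨f, hf, hs⟩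
    omega
  rw [bDR]
  exact le_antisymm (Nat.sInf_le hmemN) (le_csInf ⟨N, hmemN⟩ hlow)
end
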